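/- arXiv:2109.04126 — 8 statements merged into one kernel-verified Lean document; each statement's English description precedes it below -/
import Mathlib

section
/- Let β : [0,∞)×[0,∞) → [0,∞) be a function of class KL (i.e. β(0,t)=0, β(·,t) strictly increasing and unbounded for each t, β(r,·) strictly decreasing for each r, and β(r,t)→0 as t→∞ for each r), and suppose β(R,0) > R for all R > 0. Define a bi-infinite sequence (r_i)_{i∈ℤ} by r_0 = 1 and r_{i-1} = β(r_i, 0) for all i ∈ ℤ (each r_i for i>0 obtained by solving the equation, which is possible since β(·,0) is a strictly increasing unbounded bijection onto its range containing (0,∞)). Then (r_i) is strictly decreasing (i.e. r_{i+1} < r_i for all i), positive, r_i → 0 as i → +∞, and r_i → +∞ as i → -∞. -/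
/-- A class-KL comparison function. -/
structure IsKL (β : ℝ → ℝ → ℝ) : Prop where
  cont : ContinuousOn (fun p : ℝ × ℝ => β p.1 p.2) (Set.Ici 0 ×ˢ Set.Ici 0)
  zero : ∀ t ≥ (0:ℝ), β 0 t = 0
  mono : ∀ t ≥ (0:ℝ), StrictMonoOn (fun r => β r t) (Set.Ici 0)
  unbdd : ∀ t ≥ (0:ℝ), ∀ M : ℝ, ∃ r ≥ (0:ℝ), M < β r t
  anti : ∀ r > (0:ℝ), StrictAntiOn (fun t => β r t) (Set.Ici 0)
  lim : ∀ r ≥ (0:ℝ), Filter.Tendsto (fun t => β r t) Filter.atTop (nhds 0)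

/-!
Only `f := β(·, 0)` enters: it is continuous on `[0, ∞)`, vanishes at `0` and satisfies `R < f R`
for `R > 0`, so `0` is its only fixed point in `[0, ∞)`. Positivity propagates forwards along
`r (i - 1) = f (r i)` because `f` vanishes only at `0` (`f R > R > 0` elsewhere), and then
`r (i + 1) < f (r (i + 1)) = r i`. A monotone limit of `r` at either end is, by continuity, a fixed
point of `f`: at `+∞` it must be `0`, and at `-∞` a finite limit would be a positive fixed point.
-/

open Filter Function Set Topology

theorem IsKL.continuousOn_left {β : ℝ → ℝ → ℝ} (hβ : IsKL β) {t : ℝ} (ht : 0 ≤ t) :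
    ContinuousOn (fun r => β r t) (Ici 0) :=
  hβ.cont.comp (continuous_id.prodMk continuous_const).continuousOn
    fun _ hr => ⟨hr, mem_Ici.mpr ht⟩

theorem isFixedPt_of_tendsto_of_comp_eq {ι α : Type*} [TopologicalSpace α] [T2Space α]
    {l : Filter ι} [l.NeBot] {x : ι → α} {g : ι → ι} {f : α → α} {s : Set α} {L : α}
    (hx : Tendsto x l (𝓝 L)) (hg : Tendsto g l l) (hxs : ∀ i, x i ∈ s)
    (hf : ContinuousWithinAt f s L) (hrec : ∀ i, x (g i) = f (x i)) : IsFixedPt f L := by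
  have hfx : Tendsto (fun i => f (x i)) l (𝓝 (f L)) :=
    hf.tendsto.comp (tendsto_nhdsWithin_of_tendsto_nhds_of_eventually_within _ hx
      (Eventually.of_forall hxs))
  have hxg : Tendsto (fun i => x (g i)) l (𝓝 L) := hx.comp hg
  simp only [hrec] at hxg
  exact tendsto_nhds_unique hfx hxg

section Recurrence

variable {f : ℝ → ℝ} {r : ℤ → ℝ}

theorem pos_of_pred_eq_map (hf0 : f 0 = 0) (hgt : ∀ R > 0, R < f R) (hr0 : 0 < r 0)
    (hrnn : ∀ i, 0 ≤ r i) (hrec : ∀ i, r (i - 1) = f (r i)) (i : ℤ) : 0 < r i := by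
  induction i using Int.induction_on with
  | zero => exact hr0
  | succ n ih =>
    refine (hrnn _).lt_of_ne fun h => ih.ne' ?_
    simpa [← h, hf0] using hrec (n + 1)
  | pred n ih => exact ih.trans (hrec (-n) ▸ hgt _ ih)

theorem succ_lt_of_pred_eq_map (hgt : ∀ R > 0, R < f R) (hpos : ∀ i, 0 < r i)
    (hrec : ∀ i, r (i - 1) = f (r i)) (i : ℤ) : r (i + 1) < r i := by
  have h := hrec (i + 1)
  rw [add_sub_cancel_right] at h
  exact h ▸ hgt _ (hpos (i + 1))

variable (hf : ContinuousOn f (Ici 0)) (hgt : ∀ R > 0, R < f R) (hrnn : ∀ i, 0 ≤ r i)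
  (hrec : ∀ i, r (i - 1) = f (r i)) (hr : Antitone r)
include hf hgt hrnn hrec hr

theorem tendsto_atTop_zero_of_pred_eq_map : Tendsto r atTop (𝓝 0) := by
  have hlim := tendsto_atTop_ciInf hr ⟨0, by rintro _ ⟨i, rfl⟩; exact hrnn i⟩
  have hL : 0 ≤ ⨅ i, r i := le_ciInf hrnn
  have hfix := isFixedPt_of_tendsto_of_comp_eq hlim
    (tendsto_atTop_add_const_right _ (-1) tendsto_id) hrnn (hf _ hL) hrec
  obtain hL0 | hL0 := hL.lt_or_eq
  · exact absurd hfix (hgt _ hL0).ne'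
  · rwa [← hL0] at hlim

theorem tendsto_atBot_atTop_of_pred_eq_map (hr0 : 0 < r 0) : Tendsto r atBot atTop := by
  refine tendsto_atBot_atTop_of_antitone hr fun b => ?_
  by_contra! hb
  have hbdd : BddAbove (range r) := ⟨b, by rintro _ ⟨i, rfl⟩; exact (hb i).le⟩
  have hL : 0 < ⨆ i, r i := hr0.trans_le (le_ciSup hbdd 0)
  have hfix := isFixedPt_of_tendsto_of_comp_eq (tendsto_atBot_ciSup hr hbdd)
    (tendsto_atBot_add_const_right _ (-1) tendsto_id) hrnn (hf _ hL.le) hrec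
  exact (hgt _ hL).ne' hfix

end Recurrence

theorem stmt_0 (β : ℝ → ℝ → ℝ) (hβ : IsKL β)
    (hgt : ∀ R > (0:ℝ), R < β R 0)
    (r : ℤ → ℝ) (hr0 : r 0 = 1)
    (hrnn : ∀ i : ℤ, 0 ≤ r i)
    (hrec : ∀ i : ℤ, r (i - 1) = β (r i) 0) :
    (∀ i : ℤ, r (i + 1) < r i) ∧ (∀ i : ℤ, 0 < r i) ∧
      Filter.Tendsto r Filter.atTop (nhds 0) ∧
      Filter.Tendsto r Filter.atBot Filter.atTop := by
  have hr0pos : 0 < r 0 := hr0 ▸ one_pos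
  have hpos := pos_of_pred_eq_map (f := (β · 0)) (hβ.zero 0 le_rfl) hgt hr0pos hrnn hrec
  have hdec := succ_lt_of_pred_eq_map hgt hpos hrec
  have hanti := (strictAnti_int_of_succ_lt hdec).antitone
  have hf := hβ.continuousOn_left le_rfl
  exact ⟨hdec, hpos, tendsto_atTop_zero_of_pred_eq_map hf hgt hrnn hrec hanti,
    tendsto_atBot_atTop_of_pred_eq_map hf hgt hrnn hrec hanti hr0pos⟩
end

section
/- Let U ⊆ ℝ^m be a closed cone, ν : [0,∞) → [0,∞) a strictly increasing bijection, f : Ω × U → ℝⁿ continuous on an open set Ω ⊆ ℝⁿ, and define the rescaled dynamics f̄(x,u) = f(x,u)/(1 + ν(|u|)). Suppose x : [0,T) → Ω is locally absolutely continuous, u : [0,T) → U is measurable and locally essentially bounded, and ẋ(t) = f(x(t),u(t)) for a.e. t. Let s(t) = ∫₀ᵗ (1 + ν(|u(τ)|)) dτ, S = lim_{t→T⁻} s(t), and t(·) = s⁻¹. Then y(σ) := x(t(σ)) and v(σ) := u(t(σ)) satisfy y'(σ) = f̄(y(σ), v(σ)) for a.e. σ ∈ [0,S). -/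
/-!
On every compact `[0, q] ⊆ [0, T)` the function `u` is bounded, so the primitive `s` of
`g = 1 + ν ‖u‖` is Lipschitz there, and strictly increasing since `g ≥ 1`. At a point `t` where
both `x` and `s` are differentiable (almost every `t`, by Lebesgue's differentiation theorem) the
inverse function theorem gives `tinv'(s t) = 1 / g t`, and the chain rule then differentiates
`x ∘ tinv` at `s t`. The remaining `t` form a null set, and a Lipschitz map sends null sets to
null sets, so the corresponding `σ = s t` are negligible too.
-/

open MeasureTheory Set Filter
open scoped ENNReal NNReal Topology

theorem LipschitzOnWith.volume_image_eq_zero {s : ℝ → ℝ} {A N : Set ℝ} {C : ℝ≥0}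
    (hs : LipschitzOnWith C s A) (hNA : N ⊆ A) (hN : volume N = 0) :
    volume (s '' N) = 0 := by
  have h := (hs.mono hNA).hausdorffMeasure_image_le (d := 1) zero_le_one
  rw [hausdorffMeasure_real, hN, mul_zero] at h
  exact nonpos_iff_eq_zero.1 h

theorem MonotoneOn.measurable_comp_norm {α E : Type*} [MeasurableSpace α] [NormedAddCommGroup E]
    [MeasurableSpace E] [OpensMeasurableSpace E] {ν : ℝ → ℝ} {u : α → E}
    (hν : MonotoneOn ν (Ici 0)) (hu : Measurable u) : Measurable fun τ => ν ‖u τ‖ := by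
  have hmax : Monotone fun r => ν (max r 0) := fun _ _ h =>
    hν (mem_Ici.2 (le_max_right _ _)) (mem_Ici.2 (le_max_right _ _)) (max_le_max_right 0 h)
  simpa only [Function.comp_def, max_eq_left (norm_nonneg _)] using hmax.measurable.comp hu.norm

theorem intervalIntegrable_of_norm_le {E : Type*} [NormedAddCommGroup E] {g : ℝ → E}
    {a b C : ℝ} (hab : a ≤ b) (hg : AEStronglyMeasurable g volume)
    (hC : ∀ τ ∈ Icc a b, ‖g τ‖ ≤ C) : IntervalIntegrable g volume a b :=
  (intervalIntegrable_iff_integrableOn_Icc_of_le hab).2 <| IntegrableOn.of_bound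
    measure_Icc_lt_top hg.restrict C ((ae_restrict_iff' measurableSet_Icc).2 (ae_of_all _ hC))

theorem lipschitzOnWith_integral {E : Type*} [NormedAddCommGroup E] [NormedSpace ℝ E]
    {g : ℝ → E} {a b : ℝ} {C : ℝ≥0} (hg : IntervalIntegrable g volume a b)
    (hC : ∀ τ ∈ Icc a b, ‖g τ‖ ≤ C) :
    LipschitzOnWith C (fun t => ∫ τ in a..t, g τ) (Icc a b) := by
  have hint : ∀ t ∈ Icc a b, IntervalIntegrable g volume a t := fun t ht =>
    hg.mono_set (uIcc_subset_uIcc left_mem_uIcc (Icc_subset_uIcc ht))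
  refine LipschitzOnWith.of_dist_le_mul fun t₁ h₁ t₂ h₂ => ?_
  rw [dist_eq_norm, intervalIntegral.integral_interval_sub_left (hint t₁ h₁) (hint t₂ h₂),
    Real.dist_eq]
  refine intervalIntegral.norm_integral_le_of_norm_le_const fun τ hτ => hC τ ?_
  exact uIcc_subset_Icc h₂ h₁ (uIoc_subset_uIcc hτ)

theorem strictMonoOn_integral {g : ℝ → ℝ} {a b : ℝ} (hg : IntervalIntegrable g volume a b)
    (hpos : ∀ τ ∈ Icc a b, 0 < g τ) :
    StrictMonoOn (fun t => ∫ τ in a..t, g τ) (Icc a b) := by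
  have hint : ∀ t ∈ Icc a b, IntervalIntegrable g volume a t := fun t ht =>
    hg.mono_set (uIcc_subset_uIcc left_mem_uIcc (Icc_subset_uIcc ht))
  intro t₁ h₁ t₂ h₂ h₁₂
  rw [← sub_pos, intervalIntegral.integral_interval_sub_left (hint t₂ h₂) (hint t₁ h₁)]
  refine intervalIntegral.intervalIntegral_pos_of_pos_on
    ((hint t₁ h₁).symm.trans (hint t₂ h₂)) (fun τ hτ => hpos τ ?_) h₁₂
  exact ⟨h₁.1.trans hτ.1.le, hτ.2.le.trans h₂.2⟩

theorem StrictMonoOn.hasDerivAt_of_leftInvOn {s tinv : ℝ → ℝ} {a b t d : ℝ}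
    (hmono : StrictMonoOn s (Icc a b)) (hcont : ContinuousOn s (Icc a b))
    (hinv : LeftInvOn tinv s (Icc a b)) (ht : t ∈ Ioo a b) (hd : HasDerivAt s d t)
    (hd0 : d ≠ 0) : HasDerivAt tinv d⁻¹ (s t) := by
  have hIoo : Ioo a b ⊆ Icc a b := Ioo_subset_Icc_self
  have hab : a ≤ b := (ht.1.trans ht.2).le
  have hstrict : ∀ t' ∈ Ioo a b, s t' ∈ Ioo (s a) (s b) := fun t' h' =>
    ⟨hmono (left_mem_Icc.2 hab) (hIoo h') h'.1, hmono (hIoo h') (right_mem_Icc.2 hab) h'.2⟩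
  -- by the intermediate value theorem, `tinv` inverts `s` on the whole of `(s a, s b)`
  have hrightInv : ∀ y ∈ Ioo (s a) (s b), tinv y ∈ Ioo a b ∧ s (tinv y) = y := by
    intro y hy
    obtain ⟨t', ht', rfl⟩ := intermediate_value_Ioo hab hcont hy
    rw [hinv (hIoo ht')]
    exact ⟨ht', rfl⟩
  have hnhds : Ioo (s a) (s b) ∈ 𝓝 (s t) := isOpen_Ioo.mem_nhds (hstrict t ht)
  have htinv_mono : MonotoneOn tinv (Ioo (s a) (s b)) := fun y₁ h₁ y₂ h₂ h₁₂ => by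
    rwa [← hmono.le_iff_le (hIoo (hrightInv y₁ h₁).1) (hIoo (hrightInv y₂ h₂).1),
      (hrightInv y₁ h₁).2, (hrightInv y₂ h₂).2]
  have himage : tinv '' Ioo (s a) (s b) ∈ 𝓝 (tinv (s t)) := by
    rw [hinv (hIoo ht)]
    refine mem_of_superset (isOpen_Ioo.mem_nhds ht) fun t' ht' => ?_
    exact ⟨s t', hstrict t' ht', hinv (hIoo ht')⟩
  refine HasDerivAt.of_local_left_inverse
    (continuousAt_of_monotoneOn_of_image_mem_nhds htinv_mono hnhds himage)
    (by rwa [hinv (hIoo ht)]) hd0 ?_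
  exact eventually_of_mem hnhds fun y hy => (hrightInv y hy).2

theorem ae_hasDerivAt_comp_leftInvOn_of_integral {E : Type*} [NormedAddCommGroup E]
    [NormedSpace ℝ E] {x x' : ℝ → E} {g s tinv : ℝ → ℝ} {a b : ℝ} {C : ℝ≥0}
    (hg : IntervalIntegrable g volume a b) (hpos : ∀ τ ∈ Icc a b, 0 < g τ)
    (hC : ∀ τ ∈ Icc a b, ‖g τ‖ ≤ C) (hs : ∀ t, s t = ∫ τ in a..t, g τ)
    (hinv : LeftInvOn tinv s (Icc a b)) (hx : ∀ᵐ t, t ∈ Icc a b → HasDerivAt x (x' t) t) :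
    ∀ᵐ σ, σ ∈ s '' Icc a b →
      HasDerivAt (fun σ' => x (tinv σ')) ((g (tinv σ))⁻¹ • x' (tinv σ)) σ := by
  have hsF : s = fun t => ∫ τ in a..t, g τ := funext hs
  have hlip : LipschitzOnWith C s (Icc a b) := hsF ▸ lipschitzOnWith_integral hg hC
  have hmono : StrictMonoOn s (Icc a b) := hsF ▸ strictMonoOn_integral hg hpos
  set N := {t ∈ Ioo a b | ¬(HasDerivAt x (x' t) t ∧ HasDerivAt s (g t) t)}
  have hN : volume N = 0 := by
    refine measure_eq_zero_iff_ae_notMem.2 ?_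
    filter_upwards [hx, hg.ae_hasDerivAt_integral] with t hxt hst hN
    obtain ⟨ht, hbad⟩ := hN
    have ht' : t ∈ uIcc a b := Icc_subset_uIcc (Ioo_subset_Icc_self ht)
    exact hbad ⟨hxt (Ioo_subset_Icc_self ht), hsF ▸ hst ht' a left_mem_uIcc⟩
  have hbad : volume ({s a, s b} ∪ s '' N) = 0 :=
    measure_union_null ((toFinite _).measure_zero _)
      (hlip.volume_image_eq_zero
        (sep_subset _ _ |>.trans Ioo_subset_Icc_self) hN)
  filter_upwards [measure_eq_zero_iff_ae_notMem.1 hbad] with σ hσ hσs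
  obtain ⟨t, htab, rfl⟩ := hσs
  rcases eq_endpoints_or_mem_Ioo_of_mem_Icc htab with rfl | rfl | ht
  · exact absurd (Or.inl (Or.inl rfl)) hσ
  · exact absurd (Or.inl (Or.inr rfl)) hσ
  obtain ⟨hxt, hst⟩ : HasDerivAt x (x' t) t ∧ HasDerivAt s (g t) t :=
    not_not.1 fun h => hσ (Or.inr ⟨t, ⟨ht, h⟩, rfl⟩)
  have htinv := hmono.hasDerivAt_of_leftInvOn hlip.continuousOn hinv ht hst (hpos t htab).ne'
  have hxt' : HasDerivAt x (x' t) (tinv (s t)) := by rwa [hinv htab]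
  rw [hinv htab]
  exact hxt'.scomp (s t) htinv

theorem ENNReal.exists_rat_gt_of_ofReal_lt {t : ℝ} {T : ℝ≥0∞} (htT : ENNReal.ofReal t < T) :
    ∃ q : ℚ, t < q ∧ ENNReal.ofReal q < T := by
  obtain ⟨q, -, htq, hqT⟩ := ENNReal.lt_iff_exists_rat_btwn.1 htT
  exact ⟨q, (ENNReal.ofReal_lt_ofReal_iff'.1 htq).1, hqT⟩

theorem stmt_2_general {n m : ℕ}
    (ν : ℝ → ℝ) (hνmono : StrictMonoOn ν (Set.Ici 0))
    (hνbij : Set.BijOn ν (Set.Ici 0) (Set.Ici 0))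
    (f : EuclideanSpace ℝ (Fin n) → EuclideanSpace ℝ (Fin m) → EuclideanSpace ℝ (Fin n))
    (T : ℝ≥0∞)
    (x : ℝ → EuclideanSpace ℝ (Fin n)) (u : ℝ → EuclideanSpace ℝ (Fin m))
    (humeas : Measurable u)
    (hub : ∀ a : ℝ, 0 ≤ a → ENNReal.ofReal a < T → ∃ M : ℝ, ∀ τ ∈ Set.Icc (0:ℝ) a, ‖u τ‖ ≤ M)
    (hode : ∀ᵐ t ∂(volume : Measure ℝ), 0 ≤ t → ENNReal.ofReal t < T →
      HasDerivAt x (f (x t) (u t)) t)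
    (s : ℝ → ℝ) (hs : ∀ t : ℝ, s t = ∫ τ in (0:ℝ)..t, (1 + ν ‖u τ‖))
    (tinv : ℝ → ℝ)
    (htinv : ∀ t : ℝ, 0 ≤ t → ENNReal.ofReal t < T → tinv (s t) = t) :
    ∀ᵐ σ ∂(volume : Measure ℝ), σ ∈ s '' {t : ℝ | 0 ≤ t ∧ ENNReal.ofReal t < T} →
      HasDerivAt (fun σ' => x (tinv σ'))
        ((1 + ν ‖u (tinv σ)‖)⁻¹ • f (x (tinv σ)) (u (tinv σ))) σ := by
  have hν_nonneg : ∀ τ, 0 ≤ ν ‖u τ‖ := fun τ => hνbij.mapsTo (mem_Ici.2 (norm_nonneg _))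
  have hg_meas : Measurable fun τ => 1 + ν ‖u τ‖ :=
    measurable_const.add (hνmono.monotoneOn.measurable_comp_norm humeas)
  have hcompact : ∀ q : ℚ, ∀ᵐ σ, (0 ≤ (q : ℝ) ∧ ENNReal.ofReal q < T) →
      σ ∈ s '' Icc 0 (q : ℝ) → HasDerivAt (fun σ' => x (tinv σ'))
        ((1 + ν ‖u (tinv σ)‖)⁻¹ • f (x (tinv σ)) (u (tinv σ))) σ := by
    refine fun q => eventually_imp_distrib_left.2 fun ⟨hq0, hqT⟩ => ?_
    have hqI : ∀ t ∈ Icc 0 (q : ℝ), 0 ≤ t ∧ ENNReal.ofReal t < T := fun t ht =>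
      ⟨ht.1, (ENNReal.ofReal_le_ofReal ht.2).trans_lt hqT⟩
    obtain ⟨M, hM⟩ := hub q hq0 hqT
    have hbound : ∀ τ ∈ Icc 0 (q : ℝ), ‖1 + ν ‖u τ‖‖ ≤ (1 + ν (max M 0)).toNNReal := by
      intro τ hτ
      rw [Real.norm_of_nonneg (by linarith [hν_nonneg τ])]
      refine le_trans ?_ (Real.le_coe_toNNReal _)
      gcongr
      exact hνmono.monotoneOn (norm_nonneg _) (le_max_right M 0)
        ((hM τ hτ).trans (le_max_left M 0))
    refine ae_hasDerivAt_comp_leftInvOn_of_integral (x' := fun t => f (x t) (u t))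
      (intervalIntegrable_of_norm_le hq0 hg_meas.aestronglyMeasurable hbound)
      (fun τ _ => by linarith [hν_nonneg τ]) hbound hs
      (fun t ht => htinv t (hqI t ht).1 (hqI t ht).2) ?_
    filter_upwards [hode] with t ht htq using ht (hqI t htq).1 (hqI t htq).2
  filter_upwards [ae_all_iff.2 hcompact] with σ hσ hσs
  obtain ⟨t, ⟨ht0, htT⟩, rfl⟩ := hσs
  obtain ⟨q, htq, hqT⟩ := ENNReal.exists_rat_gt_of_ofReal_lt htT
  exact hσ q ⟨ht0.trans htq.le, hqT⟩ ⟨t, ⟨ht0, htq.le⟩, rfl⟩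

theorem stmt_2 {n m : ℕ}
    (U : Set (EuclideanSpace ℝ (Fin m))) (hUcl : IsClosed U)
    (hUcone : ∀ c : ℝ, 0 ≤ c → ∀ v ∈ U, c • v ∈ U)
    (ν : ℝ → ℝ) (hνmono : StrictMonoOn ν (Set.Ici 0))
    (hνbij : Set.BijOn ν (Set.Ici 0) (Set.Ici 0))
    (Ω : Set (EuclideanSpace ℝ (Fin n))) (hΩ : IsOpen Ω)
    (f : EuclideanSpace ℝ (Fin n) → EuclideanSpace ℝ (Fin m) → EuclideanSpace ℝ (Fin n))
    (hf : ContinuousOn (fun q : EuclideanSpace ℝ (Fin n) × EuclideanSpace ℝ (Fin m) =>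
      f q.1 q.2) (Ω ×ˢ U))
    (T : ℝ≥0∞) (hT : 0 < T)
    (x : ℝ → EuclideanSpace ℝ (Fin n)) (u : ℝ → EuclideanSpace ℝ (Fin m))
    (hmem : ∀ t : ℝ, 0 ≤ t → ENNReal.ofReal t < T → x t ∈ Ω ∧ u t ∈ U)
    (humeas : Measurable u)
    (hub : ∀ a : ℝ, 0 ≤ a → ENNReal.ofReal a < T → ∃ M : ℝ, ∀ τ ∈ Set.Icc (0:ℝ) a, ‖u τ‖ ≤ M)
    (hode : ∀ᵐ t ∂(volume : Measure ℝ), 0 ≤ t → ENNReal.ofReal t < T →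
      HasDerivAt x (f (x t) (u t)) t)
    (s : ℝ → ℝ) (hs : ∀ t : ℝ, s t = ∫ τ in (0:ℝ)..t, (1 + ν ‖u τ‖))
    (tinv : ℝ → ℝ)
    (htinv : ∀ t : ℝ, 0 ≤ t → ENNReal.ofReal t < T → tinv (s t) = t) :
    ∀ᵐ σ ∂(volume : Measure ℝ), σ ∈ s '' {t : ℝ | 0 ≤ t ∧ ENNReal.ofReal t < T} →
      HasDerivAt (fun σ' => x (tinv σ'))
        ((1 + ν ‖u (tinv σ)‖)⁻¹ • f (x (tinv σ)) (u (tinv σ))) σ :=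
  stmt_2_general ν hνmono hνbij f T x u humeas hub hode s hs tinv htinv
end

section
/- Let β ∈ KL and let N : {(R,r) : 0 < r < R} → (0,∞) be continuous, strictly decreasing in r and strictly increasing in R. For 0 < r < R, let S(R,r) be the unique s > 0 satisfying β(R, s/(1+N(R,r))) = r (assume for each R > 0 that t ↦ β(R,t) is a continuous strictly decreasing bijection from [0,∞) onto (0, β(R,0)]). Then S is continuous, r ↦ S(R,r) is strictly decreasing, R ↦ S(R,r) is strictly increasing, and the inverse ρ(R,·) of r ↦ S(R,r) satisfies the identity β(R, s/(1+N(R,ρ(R,s)))) = ρ(R,s) for all s in the range of S(R,·). -/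
open Set

lemma anti_rev (β : ℝ → ℝ → ℝ) (hβ : IsKL β) {R t₁ t₂ : ℝ} (hR : 0 < R)
    (h1 : 0 ≤ t₁) (h2 : 0 ≤ t₂) (h : β R t₁ < β R t₂) : t₂ < t₁ := by
  by_contra hle
  push_neg at hle
  rcases hle.lt_or_eq with hlt | heq
  · have := hβ.anti R hR h1 h2 hlt
    simp only at this
    linarith
  · rw [heq] at h; exact lt_irrefl _ h

lemma beta_contAt (β : ℝ → ℝ → ℝ) (hβ : IsKL β) {c : ℝ} (hc : 0 < c)
    {p₀ : ℝ × ℝ} (hp : 0 < p₀.1) :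
    ContinuousAt (fun p : ℝ × ℝ => β p.1 c) p₀ := by
  have h1 : ContinuousAt (fun q : ℝ × ℝ => β q.1 q.2) (p₀.1, c) :=
    hβ.cont.continuousAt (prod_mem_nhds (Ici_mem_nhds hp) (Ici_mem_nhds hc))
  exact ContinuousAt.comp (f := fun p : ℝ × ℝ => (p.1, c)) h1
    ((continuous_fst.prodMk continuous_const).continuousAt)

lemma aux_cont (β : ℝ → ℝ → ℝ) (hβ : IsKL β) (T : ℝ × ℝ → ℝ)
    (hT : ∀ p : ℝ × ℝ, 0 < p.2 → p.2 < p.1 → 0 < T p ∧ β p.1 (T p) = p.2) :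
    ContinuousOn T {p : ℝ × ℝ | 0 < p.2 ∧ p.2 < p.1} := by
  have hUopen : IsOpen {p : ℝ × ℝ | 0 < p.2 ∧ p.2 < p.1} :=
    (isOpen_lt continuous_const continuous_snd).inter (isOpen_lt continuous_snd continuous_fst)
  intro p₀ hp₀
  apply ContinuousAt.continuousWithinAt
  obtain ⟨hr₀, hrR₀⟩ := hp₀
  have hR₀ : 0 < p₀.1 := hr₀.trans hrR₀
  obtain ⟨ht₀pos, ht₀⟩ := hT p₀ hr₀ hrR₀
  have hUnhds : {p : ℝ × ℝ | 0 < p.2 ∧ p.2 < p.1} ∈ nhds p₀ := hUopen.mem_nhds ⟨hr₀, hrR₀⟩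
  rw [ContinuousAt, tendsto_order]
  constructor
  · intro b hb
    set t₁ := max b (T p₀ / 2) with ht₁def
    have ht₁pos : 0 < t₁ := lt_max_of_lt_right (by linarith)
    have ht₁lt : t₁ < T p₀ := max_lt hb (by linarith)
    have hβ₁ : p₀.2 < β p₀.1 t₁ := by
      have h := hβ.anti p₀.1 hR₀ (le_of_lt ht₁pos) (le_of_lt ht₀pos) ht₁lt
      simp only at h
      rw [ht₀] at h; exact h
    set m := (p₀.2 + β p₀.1 t₁) / 2 with hmdef
    have hm1 : p₀.2 < m := by rw [hmdef]; linarith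
    have hm2 : m < β p₀.1 t₁ := by rw [hmdef]; linarith
    have hev1 : ∀ᶠ p in nhds p₀, m < β p.1 t₁ :=
      (beta_contAt β hβ ht₁pos hR₀).eventually (eventually_gt_nhds hm2)
    have hev2 : ∀ᶠ p in nhds p₀, p.2 < m :=
      ((isOpen_lt continuous_snd continuous_const).mem_nhds hm1 : {p : ℝ × ℝ | p.2 < m} ∈ nhds p₀)
    filter_upwards [hUnhds, hev1, hev2] with p hpU h1 h2
    obtain ⟨hTp, hTpe⟩ := hT p hpU.1 hpU.2
    have : t₁ < T p := by
      apply anti_rev β hβ (hpU.1.trans hpU.2) hTp.le ht₁pos.le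
      rw [hTpe]; linarith
    exact lt_of_le_of_lt (le_max_left _ _) this
  · intro b hb
    have hbpos : 0 < b := ht₀pos.trans hb
    have hβ₁ : β p₀.1 b < p₀.2 := by
      have h := hβ.anti p₀.1 hR₀ (le_of_lt ht₀pos) (le_of_lt hbpos) hb
      simp only at h
      rw [ht₀] at h; exact h
    set m := (β p₀.1 b + p₀.2) / 2 with hmdef
    have hm1 : β p₀.1 b < m := by rw [hmdef]; linarith
    have hm2 : m < p₀.2 := by rw [hmdef]; linarith
    have hev1 : ∀ᶠ p in nhds p₀, β p.1 b < m :=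
      (beta_contAt β hβ hbpos hR₀).eventually (eventually_lt_nhds hm1)
    have hev2 : ∀ᶠ p in nhds p₀, m < p.2 :=
      ((isOpen_lt continuous_const continuous_snd).mem_nhds hm2 : {p : ℝ × ℝ | m < p.2} ∈ nhds p₀)
    filter_upwards [hUnhds, hev1, hev2] with p hpU h1 h2
    obtain ⟨hTp, hTpe⟩ := hT p hpU.1 hpU.2
    apply anti_rev β hβ (hpU.1.trans hpU.2) hbpos.le hTp.le
    rw [hTpe]; linarith

theorem stmt_5 (β : ℝ → ℝ → ℝ) (hβ : IsKL β)
    (hbij : ∀ R > (0:ℝ), Set.BijOn (fun t => β R t) (Set.Ici 0) (Set.Ioc 0 (β R 0)))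
    (N : ℝ → ℝ → ℝ)
    (hNc : ContinuousOn (fun p : ℝ × ℝ => N p.1 p.2) {p : ℝ × ℝ | 0 < p.2 ∧ p.2 < p.1})
    (hNpos : ∀ R r : ℝ, 0 < r → r < R → 0 < N R r)
    (hNanti : ∀ R > (0:ℝ), StrictAntiOn (fun r => N R r) (Set.Ioo 0 R))
    (hNmono : ∀ r > (0:ℝ), StrictMonoOn (fun R => N R r) (Set.Ioi r))
    (S : ℝ → ℝ → ℝ)
    (hS : ∀ R r : ℝ, 0 < r → r < R → 0 < S R r ∧ β R (S R r / (1 + N R r)) = r) :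
    ContinuousOn (fun p : ℝ × ℝ => S p.1 p.2) {p : ℝ × ℝ | 0 < p.2 ∧ p.2 < p.1} ∧
    (∀ R > (0:ℝ), StrictAntiOn (fun r => S R r) (Set.Ioo 0 R)) ∧
    (∀ r > (0:ℝ), StrictMonoOn (fun R => S R r) (Set.Ioi r)) ∧
    ∀ ρ : ℝ → ℝ → ℝ,
      (∀ R > (0:ℝ), ∀ s ∈ (fun r => S R r) '' Set.Ioo 0 R,
        ρ R s ∈ Set.Ioo 0 R ∧ S R (ρ R s) = s) →
      ∀ R > (0:ℝ), ∀ s ∈ (fun r => S R r) '' Set.Ioo 0 R,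
        β R (s / (1 + N R (ρ R s))) = ρ R s := by
  -- basic facts about T R r := S R r / (1 + N R r)
  have hNpos1 : ∀ R r : ℝ, 0 < r → r < R → 0 < 1 + N R r := by
    intro R r h1 h2; have := hNpos R r h1 h2; linarith
  have hTfact : ∀ R r : ℝ, 0 < r → r < R →
      0 < S R r / (1 + N R r) ∧ β R (S R r / (1 + N R r)) = r := by
    intro R r h1 h2
    exact ⟨div_pos (hS R r h1 h2).1 (hNpos1 R r h1 h2), (hS R r h1 h2).2⟩
  have hSval : ∀ R r : ℝ, 0 < r → r < R →
      S R r = (S R r / (1 + N R r)) * (1 + N R r) := by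
    intro R r h1 h2
    exact (div_mul_cancel₀ (S R r) (hNpos1 R r h1 h2).ne').symm
  refine ⟨?_, ?_, ?_, ?_⟩
  · -- continuity
    have hTc := aux_cont β hβ (fun p : ℝ × ℝ => S p.1 p.2 / (1 + N p.1 p.2))
      (fun p hp1 hp2 => hTfact p.1 p.2 hp1 hp2)
    have h2 : ContinuousOn
        (fun p : ℝ × ℝ => (S p.1 p.2 / (1 + N p.1 p.2)) * (1 + N p.1 p.2))
        {p : ℝ × ℝ | 0 < p.2 ∧ p.2 < p.1} :=
      hTc.mul (continuousOn_const.add hNc)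
    exact h2.congr (fun p hp => hSval p.1 p.2 hp.1 hp.2)
  · -- strict anti in r
    intro R hR r₁ h₁ r₂ h₂ h12
    obtain ⟨hr₁, hr₁R⟩ := h₁
    obtain ⟨hr₂, hr₂R⟩ := h₂
    obtain ⟨ht₁pos, ht₁eq⟩ := hTfact R r₁ hr₁ hr₁R
    obtain ⟨ht₂pos, ht₂eq⟩ := hTfact R r₂ hr₂ hr₂R
    have htlt : S R r₂ / (1 + N R r₂) < S R r₁ / (1 + N R r₁) := by
      apply anti_rev β hβ (hr₁.trans hr₁R) ht₁pos.le ht₂pos.le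
      rw [ht₁eq, ht₂eq]; exact h12
    have hNlt : N R r₂ < N R r₁ := hNanti R hR ⟨hr₁, hr₁R⟩ ⟨hr₂, hr₂R⟩ h12
    have hN₂ := hNpos R r₂ hr₂ hr₂R
    simp only
    rw [hSval R r₁ hr₁ hr₁R, hSval R r₂ hr₂ hr₂R]
    nlinarith [ht₂pos, ht₁pos]
  · -- strict mono in R
    intro r hr R₁ h₁ R₂ h₂ h12
    have hrR₁ : r < R₁ := h₁
    have hrR₂ : r < R₂ := h₂
    obtain ⟨ht₁pos, ht₁eq⟩ := hTfact R₁ r hr hrR₁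
    obtain ⟨ht₂pos, ht₂eq⟩ := hTfact R₂ r hr hrR₂
    have hkey : β R₂ (S R₁ r / (1 + N R₁ r)) > r := by
      have := hβ.mono (S R₁ r / (1 + N R₁ r)) ht₁pos.le
        (Set.mem_Ici.2 (hr.trans hrR₁).le) (Set.mem_Ici.2 ((hr.trans hrR₁).trans h12).le) h12
      simp only at this
      rw [ht₁eq] at this; exact this
    have htlt : S R₁ r / (1 + N R₁ r) < S R₂ r / (1 + N R₂ r) := by
      apply anti_rev β hβ (hr.trans hrR₂) ht₂pos.le ht₁pos.le
      rw [ht₂eq]; exact hkey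
    have hNlt : N R₁ r < N R₂ r := hNmono r hr h₁ h₂ h12
    have hN₁ := hNpos R₁ r hr hrR₁
    simp only
    rw [hSval R₁ r hr hrR₁, hSval R₂ r hr hrR₂]
    nlinarith [ht₁pos, ht₂pos]
  · -- inverse identity
    intro ρ hρ R hR s hs
    obtain ⟨hmem, hSρ⟩ := hρ R hR s hs
    obtain ⟨h1, h2⟩ := hmem
    have h := (hS R (ρ R s) h1 h2).2
    rw [hSρ] at h
    exact h
end

section
/- Let U ⊆ ℝ^m be a closed cone, ν a strictly increasing continuous bijection of [0,∞), f continuous with rescaled dynamics f̄(x,u) = f(x,u)/(1+ν(|u|)), and extended dynamics F(x,w₀,w) = lim_{r→w₀⁺} f̄(x, (w/|w|)·ν⁻¹(|w|/r)) assumed to exist, be continuous and locally bounded on closure(ℝⁿ∖C) × closure(𝕌), where 𝕌 = {(w₀,w) ∈ (0,∞)×U : w₀+|w|=1}. Then for every x ∉ C and every p ∈ ℝⁿ, the Hamiltonians coincide: inf_{u∈U} ⟨p, f̄(x,u)⟩ = inf_{(w₀,w)∈closure(𝕌)} ⟨p, F(x,w₀,w)⟩. Consequently a function W is a control Lyapunov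 function for the rescaled system if and only if it is one for the extended system. -/
open Set Filter Metric
open scoped RealInnerProductSpace

/-- The proximal subdifferential of `W` at `x`. -/
def proxSubdiff {n : ℕ} (W : EuclideanSpace ℝ (Fin n) → ℝ) (x : EuclideanSpace ℝ (Fin n)) :
    Set (EuclideanSpace ℝ (Fin n)) :=
  {p | ∃ σ > (0:ℝ), ∃ η > (0:ℝ), ∀ y, ‖y - x‖ ≤ η →
    ⟪p, y - x⟫ ≤ W y - W x + σ * ‖y - x‖ ^ 2}

/-- The limiting (Mordukhovich) subdifferential of `W` at `x`. -/
def limSubdiff {n : ℕ} (W : EuclideanSpace ℝ (Fin n) → ℝ) (x : EuclideanSpace ℝ (Fin n)) :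
    Set (EuclideanSpace ℝ (Fin n)) :=
  {p | ∃ xs ps : ℕ → EuclideanSpace ℝ (Fin n),
    (∀ i, ps i ∈ proxSubdiff W (xs i)) ∧
    Tendsto xs atTop (nhds x) ∧ Tendsto ps atTop (nhds p)}

/-- `W` is a control Lyapunov function for the system `ẋ = g(x,u)`, `u ∈ V`, with
target `C`:  locally Lipschitz on the closure of the complement of `C`, positive
definite and proper on `ℝⁿ ∖ C`, and satisfying the infinitesimal decrease condition
with some continuous, strictly increasing, positive decrease rate `γ`. -/
def IsCLF {n : ℕ} {F : Type*}
    (g : EuclideanSpace ℝ (Fin n) → F → EuclideanSpace ℝ (Fin n))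
    (V : Set F) (C : Set (EuclideanSpace ℝ (Fin n)))
    (W : EuclideanSpace ℝ (Fin n) → ℝ) : Prop :=
  (∀ K ⊆ closure Cᶜ, IsCompact K → ∃ L : NNReal, LipschitzOnWith L W K) ∧
  (∀ x ∉ C, 0 < W x) ∧ (∀ x ∈ frontier C, W x = 0) ∧ (∀ x, 0 ≤ W x) ∧
  (∀ K : Set ℝ, IsCompact K → IsCompact (Cᶜ ∩ W ⁻¹' K)) ∧
  ∃ γ : ℝ → ℝ, ContinuousOn γ (Set.Ioi 0) ∧ StrictMonoOn γ (Set.Ioi 0) ∧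
    (∀ r > (0:ℝ), 0 < γ r) ∧
    ∀ x ∉ C, ∀ p ∈ limSubdiff W x,
      sInf {y : ℝ | ∃ u ∈ V, y = ⟪p, g x u⟫} < -γ (W x)

open scoped Topology

/-!
On `𝕌` the extended dynamics is the rescaled dynamics read through the control
`u(w₀, w) = (w / ‖w‖) ν⁻¹(‖w‖ / w₀)`: by continuity of `f`, `ν` and `ν⁻¹` its defining limit is
just the value there. As `u ↦ (w₀, w)(u)` inverts this map, every rescaled velocity is an
extended velocity, and conversely every extended velocity at a point of `closure 𝕌` is, by the
defining limit, a limit of rescaled velocities. The two velocity sets therefore have the same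
closure, so the infima of `⟪p, ·⟫` over them agree; the decrease condition is the only part of a
control Lyapunov function that sees the dynamics.
-/

theorem Real.sInf_eq_of_subset_of_subset_closure {A B : Set ℝ} (hAB : A ⊆ B)
    (hBA : B ⊆ closure A) : sInf A = sInf B := by
  rcases A.eq_empty_or_nonempty with rfl | hA
  · rw [closure_empty, subset_empty_iff] at hBA
    rw [hBA]
  by_cases hbdd : BddBelow A
  · have hglb := (isGLB_iff_of_subset_of_subset_closure hAB hBA).1 (isGLB_csInf hA hbdd)
    exact (hglb.csInf_eq (hA.mono hAB)).symm
  · rw [Real.sInf_of_not_bddBelow hbdd, Real.sInf_of_not_bddBelow (mt (BddBelow.mono hAB) hbdd)]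

theorem sInf_image_eq_of_subset_of_subset_closure {X : Type*} [TopologicalSpace X]
    {φ : X → ℝ} (hφ : Continuous φ) {A B : Set X} (hAB : A ⊆ B) (hBA : B ⊆ closure A) :
    sInf (φ '' A) = sInf (φ '' B) :=
  Real.sInf_eq_of_subset_of_subset_closure (image_mono hAB)
    ((image_mono hBA).trans (image_closure_subset_closure_image hφ))

theorem StrictMonoOn.monotoneOn_of_rightInvOn {α β : Type*} [LinearOrder α] [Preorder β]
    {f : α → β} {g : β → α} {s : Set α} {t : Set β} (hf : StrictMonoOn f s)
    (hg : MapsTo g t s) (hfg : RightInvOn g f t) : MonotoneOn g t := by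
  intro a ha b hb hab
  by_contra! hlt
  have := hf (hg hb) (hg ha) hlt
  rw [hfg ha, hfg hb] at this
  exact this.not_ge hab

theorem MonotoneOn.continuousOn_Ici_of_surjOn {g : ℝ → ℝ} {a b : ℝ}
    (hmono : MonotoneOn g (Ici a)) (hmaps : MapsTo g (Ici a) (Ici b))
    (hsurj : SurjOn g (Ici a) (Ici b)) : ContinuousOn g (Ici a) := by
  rw [continuousOn_iff_continuous_domRestrict]
  have hres : Continuous (hmaps.restrict g _ _) :=
    Monotone.continuous_of_surjective (fun x y hxy => hmono x.2 y.2 hxy) fun y =>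
      let ⟨x, hx, hxy⟩ := hsurj y.2
      ⟨⟨x, hx⟩, Subtype.ext hxy⟩
  exact continuous_subtype_val.comp hres

structure IsStrictMonoEquivIci (ν νinv : ℝ → ℝ) : Prop where
  strictMonoOn : StrictMonoOn ν (Ici 0)
  bijOn : BijOn ν (Ici 0) (Ici 0)
  invOn : InvOn νinv ν (Ici 0) (Ici 0)

namespace IsStrictMonoEquivIci

variable {ν νinv : ℝ → ℝ}

theorem bijOn_inv (hν : IsStrictMonoEquivIci ν νinv) : BijOn νinv (Ici 0) (Ici 0) :=
  hν.bijOn.symm hν.invOn.symm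

theorem nonneg (hν : IsStrictMonoEquivIci ν νinv) {t : ℝ} (ht : 0 ≤ t) : 0 ≤ ν t :=
  hν.bijOn.mapsTo ht

theorem inv_nonneg (hν : IsStrictMonoEquivIci ν νinv) {t : ℝ} (ht : 0 ≤ t) : 0 ≤ νinv t :=
  hν.bijOn_inv.mapsTo ht

theorem apply_zero (hν : IsStrictMonoEquivIci ν νinv) : ν 0 = 0 := by
  obtain ⟨s, hs, hνs⟩ := hν.bijOn.surjOn (self_mem_Ici : (0 : ℝ) ∈ Ici 0)
  exact le_antisymm (hνs ▸ hν.strictMonoOn.monotoneOn self_mem_Ici hs hs) (hν.nonneg le_rfl)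

theorem pos (hν : IsStrictMonoEquivIci ν νinv) {t : ℝ} (ht : 0 < t) : 0 < ν t :=
  hν.apply_zero ▸ hν.strictMonoOn self_mem_Ici ht.le ht

theorem continuousOn (hν : IsStrictMonoEquivIci ν νinv) : ContinuousOn ν (Ici 0) :=
  hν.strictMonoOn.monotoneOn.continuousOn_Ici_of_surjOn hν.bijOn.mapsTo hν.bijOn.surjOn

theorem continuousOn_inv (hν : IsStrictMonoEquivIci ν νinv) : ContinuousOn νinv (Ici 0) :=
  (hν.strictMonoOn.monotoneOn_of_rightInvOn hν.bijOn_inv.mapsTo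
    hν.invOn.2).continuousOn_Ici_of_surjOn hν.bijOn_inv.mapsTo hν.bijOn_inv.surjOn

end IsStrictMonoEquivIci

noncomputable section Compactification

variable {E Y : Type*} [NormedAddCommGroup E] [NormedAddCommGroup Y] [NormedSpace ℝ Y]
  {ν νinv : ℝ → ℝ}

def compactifiedControls (U : Set E) : Set (ℝ × E) :=
  {q | 0 < q.1 ∧ q.2 ∈ U ∧ q.1 + ‖q.2‖ = 1}

def rescale (ν : ℝ → ℝ) (g : E → Y) (u : E) : Y :=
  (1 + ν ‖u‖)⁻¹ • g u

/-- `‖0‖⁻¹ • 0 = 0` realizes the convention `w / ‖w‖ = 0` at `w = 0`. -/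
def toControl [NormedSpace ℝ E] (νinv : ℝ → ℝ) (q : ℝ × E) : E :=
  νinv (‖q.2‖ / q.1) • (‖q.2‖⁻¹ • q.2)

def ofControl [NormedSpace ℝ E] (ν : ℝ → ℝ) (u : E) : ℝ × E :=
  ((1 + ν ‖u‖)⁻¹, (ν ‖u‖ / (‖u‖ * (1 + ν ‖u‖))) • u)

theorem closure_compactifiedControls_subset {U : Set E} (hU : IsClosed U) :
    closure (compactifiedControls U) ⊆ {q | 0 ≤ q.1 ∧ q.2 ∈ U} :=
  closure_minimal (fun _ hq => ⟨hq.1.le, hq.2.1⟩)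
    ((isClosed_le continuous_const continuous_fst).inter (hU.preimage continuous_snd))

theorem ofControl_mem [NormedSpace ℝ E] (hν : IsStrictMonoEquivIci ν νinv) {U : Set E}
    (hU : ∀ c : ℝ, 0 ≤ c → ∀ v ∈ U, c • v ∈ U) {u : E} (hu : u ∈ U) :
    ofControl ν u ∈ compactifiedControls U := by
  have ha : 0 ≤ ν ‖u‖ := hν.nonneg (norm_nonneg u)
  have h1a : 0 < 1 + ν ‖u‖ := by linarith
  refine ⟨inv_pos.2 h1a, hU _ (div_nonneg ha (mul_nonneg (norm_nonneg u) h1a.le)) u hu, ?_⟩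
  rcases eq_or_ne u 0 with rfl | hu0
  · simp [ofControl, hν.apply_zero]
  have hu' : 0 < ‖u‖ := norm_pos_iff.2 hu0
  rw [ofControl, norm_smul, Real.norm_of_nonneg (by positivity)]
  field_simp

theorem toControl_ofControl [NormedSpace ℝ E] (hν : IsStrictMonoEquivIci ν νinv) (u : E) :
    toControl νinv (ofControl ν u) = u := by
  rcases eq_or_ne u 0 with rfl | hu0
  · simp [toControl, ofControl]
  have hu : 0 < ‖u‖ := norm_pos_iff.2 hu0
  have ha := hν.pos hu
  have hw : ‖(ν ‖u‖ / (‖u‖ * (1 + ν ‖u‖))) • u‖ = ν ‖u‖ / (1 + ν ‖u‖) := by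
    rw [norm_smul, Real.norm_of_nonneg (by positivity)]
    field_simp
  have hratio : ν ‖u‖ / (1 + ν ‖u‖) / (1 + ν ‖u‖)⁻¹ = ν ‖u‖ := by
    field_simp
  rw [toControl, ofControl, hw, hratio, hν.invOn.1 (norm_nonneg u), smul_smul, smul_smul]
  convert one_smul ℝ u using 2
  field_simp

theorem toControl_mem [NormedSpace ℝ E] (hν : IsStrictMonoEquivIci ν νinv) {U : Set E}
    (hU : ∀ c : ℝ, 0 ≤ c → ∀ v ∈ U, c • v ∈ U) {q : ℝ × E} (hq₁ : 0 ≤ q.1) (hq₂ : q.2 ∈ U) :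
    toControl νinv q ∈ U :=
  hU _ (hν.inv_nonneg (div_nonneg (norm_nonneg _) hq₁)) _ (hU _ (by positivity) _ hq₂)

theorem continuousAt_toControl [NormedSpace ℝ E] (hν : IsStrictMonoEquivIci ν νinv) {r : ℝ}
    (hr : 0 < r) (w : E) :
    ContinuousAt (fun ρ => toControl νinv (ρ, w)) r := by
  have hquot : Tendsto (fun ρ => ‖w‖ / ρ) (𝓝 r) (𝓝[Ici 0] (‖w‖ / r)) :=
    tendsto_nhdsWithin_iff.2 ⟨continuousAt_const.div continuousAt_id hr.ne',
      (eventually_gt_nhds hr).mono fun ρ hρ => div_nonneg (norm_nonneg w) hρ.le⟩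
  exact ((hν.continuousOn_inv _ (div_nonneg (norm_nonneg w) hr.le)).tendsto.comp hquot).smul
    continuousAt_const

theorem continuousOn_rescale (hν : IsStrictMonoEquivIci ν νinv) {g : E → Y} {U : Set E}
    (hg : ContinuousOn g U) : ContinuousOn (rescale ν g) U := by
  have hνnorm : Continuous fun u : E => ν ‖u‖ :=
    hν.continuousOn.comp_continuous continuous_norm fun u => norm_nonneg u
  exact ((continuous_const.add hνnorm).continuousOn.inv₀ fun u _ =>
    (add_pos_of_pos_of_nonneg one_pos (hν.nonneg (norm_nonneg u))).ne').smul hg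

theorem eq_rescale_toControl_of_tendsto [NormedSpace ℝ E] (hν : IsStrictMonoEquivIci ν νinv)
    {U : Set E} (hU : ∀ c : ℝ, 0 ≤ c → ∀ v ∈ U, c • v ∈ U) {g : E → Y} (hg : ContinuousOn g U)
    {G : ℝ × E → Y} {q : ℝ × E} (hq : q ∈ compactifiedControls U)
    (hG : Tendsto (fun r => rescale ν g (toControl νinv (r, q.2))) (𝓝[>] q.1) (𝓝 (G q))) :
    G q = rescale ν g (toControl νinv q) := by
  obtain ⟨hq₁, hq₂, -⟩ := hq
  have hu : Tendsto (fun r => toControl νinv (r, q.2)) (𝓝[>] q.1) (𝓝[U] (toControl νinv q)) :=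
    tendsto_nhdsWithin_iff.2 ⟨(continuousAt_toControl hν hq₁ q.2).tendsto.mono_left
      nhdsWithin_le_nhds, eventually_nhdsWithin_of_forall fun r hr =>
        toControl_mem hν hU (hq₁.le.trans hr.le) hq₂⟩
  exact tendsto_nhds_unique hG
    ((continuousOn_rescale hν hg _ (toControl_mem hν hU hq₁.le hq₂)).tendsto.comp hu)

theorem rescale_image_subset_image_closure [NormedSpace ℝ E] (hν : IsStrictMonoEquivIci ν νinv)
    {U : Set E} (hU : ∀ c : ℝ, 0 ≤ c → ∀ v ∈ U, c • v ∈ U) {g : E → Y} (hg : ContinuousOn g U)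
    {G : ℝ × E → Y} (hG : ∀ q ∈ closure (compactifiedControls U),
      Tendsto (fun r => rescale ν g (toControl νinv (r, q.2))) (𝓝[>] q.1) (𝓝 (G q))) :
    rescale ν g '' U ⊆ G '' closure (compactifiedControls U) := by
  rintro _ ⟨u, hu, rfl⟩
  have hq := ofControl_mem hν hU hu
  refine ⟨ofControl ν u, subset_closure hq, ?_⟩
  rw [eq_rescale_toControl_of_tendsto hν hU hg hq (hG _ (subset_closure hq)),
    toControl_ofControl hν]

theorem image_closure_subset_closure_rescale_image [NormedSpace ℝ E]
    (hν : IsStrictMonoEquivIci ν νinv) {U : Set E} (hUcl : IsClosed U)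
    (hU : ∀ c : ℝ, 0 ≤ c → ∀ v ∈ U, c • v ∈ U) {g : E → Y} {G : ℝ × E → Y}
    (hG : ∀ q ∈ closure (compactifiedControls U),
      Tendsto (fun r => rescale ν g (toControl νinv (r, q.2))) (𝓝[>] q.1) (𝓝 (G q))) :
    G '' closure (compactifiedControls U) ⊆ closure (rescale ν g '' U) := by
  rintro _ ⟨q, hq, rfl⟩
  obtain ⟨hq₁, hq₂⟩ := closure_compactifiedControls_subset hUcl hq
  exact mem_closure_of_tendsto (hG q hq) (eventually_nhdsWithin_of_forall fun r hr =>
    mem_image_of_mem _ (toControl_mem hν hU (hq₁.trans hr.le) hq₂))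

end Compactification

/-- On a set unbounded below `sInf` takes the junk value `0`. -/
noncomputable def hamiltonian {X V Y : Type*} [NormedAddCommGroup Y] [InnerProductSpace ℝ Y]
    (g : X → V → Y) (S : Set V) (x : X) (p : Y) : ℝ :=
  sInf {y | ∃ u ∈ S, y = ⟪p, g x u⟫}

theorem hamiltonian_eq_sInf_image {X V Y : Type*} [NormedAddCommGroup Y]
    [InnerProductSpace ℝ Y] (g : X → V → Y) (S : Set V) (x : X) (p : Y) :
    hamiltonian g S x p = sInf ((fun y => ⟪p, y⟫) '' (g x '' S)) := by
  rw [hamiltonian, image_image]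
  congr 1
  ext
  simp [eq_comm]

theorem isCLF_congr_of_hamiltonian_eq {n : ℕ} {F F' : Type*}
    {g : EuclideanSpace ℝ (Fin n) → F → EuclideanSpace ℝ (Fin n)} {V : Set F}
    {g' : EuclideanSpace ℝ (Fin n) → F' → EuclideanSpace ℝ (Fin n)} {V' : Set F'}
    {C : Set (EuclideanSpace ℝ (Fin n))} {W : EuclideanSpace ℝ (Fin n) → ℝ}
    (h : ∀ x ∉ C, ∀ p, hamiltonian g V x p = hamiltonian g' V' x p) :
    IsCLF g V C W ↔ IsCLF g' V' C W := by
  have hdecr : ∀ γ : ℝ → ℝ, (∀ x ∉ C, ∀ p ∈ limSubdiff W x, hamiltonian g V x p < -γ (W x)) ↔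
      ∀ x ∉ C, ∀ p ∈ limSubdiff W x, hamiltonian g' V' x p < -γ (W x) := fun γ =>
    forall₂_congr fun x hx => forall₂_congr fun p _ => by rw [h x hx p]
  simp only [hamiltonian] at hdecr
  simp only [IsCLF, hdecr]

theorem stmt_6_general {n m : ℕ}
    (U : Set (EuclideanSpace ℝ (Fin m))) (hUcl : IsClosed U)
    (hUcone : ∀ c : ℝ, 0 ≤ c → ∀ v ∈ U, c • v ∈ U)
    (C : Set (EuclideanSpace ℝ (Fin n)))
    (ν : ℝ → ℝ) (hνmono : StrictMonoOn ν (Set.Ici 0))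
    (hνbij : Set.BijOn ν (Set.Ici 0) (Set.Ici 0))
    (νinv : ℝ → ℝ) (hνinv : Set.InvOn νinv ν (Set.Ici 0) (Set.Ici 0))
    (f : EuclideanSpace ℝ (Fin n) → EuclideanSpace ℝ (Fin m) → EuclideanSpace ℝ (Fin n))
    (hf : ContinuousOn (fun q : EuclideanSpace ℝ (Fin n) × EuclideanSpace ℝ (Fin m) =>
      f q.1 q.2) (Cᶜ ×ˢ U))
    -- the compactified control set 𝕌
    (𝕌 : Set (ℝ × EuclideanSpace ℝ (Fin m)))
    (h𝕌 : 𝕌 = {q : ℝ × EuclideanSpace ℝ (Fin m) | 0 < q.1 ∧ q.2 ∈ U ∧ q.1 + ‖q.2‖ = 1})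
    -- the extended dynamics F, assumed to exist as a limit of the rescaled dynamics,
    -- continuous and locally bounded on closure(ℝⁿ∖C) × closure 𝕌
    (FF : EuclideanSpace ℝ (Fin n) → ℝ → EuclideanSpace ℝ (Fin m) → EuclideanSpace ℝ (Fin n))
    (hFFlim : ∀ x ∈ closure Cᶜ, ∀ q ∈ closure 𝕌,
      Tendsto (fun r : ℝ =>
          (1 + ν ‖(νinv (‖q.2‖ / r)) • (‖q.2‖⁻¹ • q.2)‖)⁻¹ •
            f x ((νinv (‖q.2‖ / r)) • (‖q.2‖⁻¹ • q.2)))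
        (nhdsWithin q.1 (Set.Ioi q.1)) (nhds (FF x q.1 q.2))) :
    (∀ x ∉ C, ∀ p : EuclideanSpace ℝ (Fin n),
      sInf {y : ℝ | ∃ u ∈ U, y = ⟪p, (1 + ν ‖u‖)⁻¹ • f x u⟫} =
      sInf {y : ℝ | ∃ q ∈ closure 𝕌, y = ⟪p, FF x q.1 q.2⟫}) ∧
    ∀ W : EuclideanSpace ℝ (Fin n) → ℝ,
      IsCLF (fun x u => (1 + ν ‖u‖)⁻¹ • f x u) U C W ↔
      IsCLF (fun x (q : ℝ × EuclideanSpace ℝ (Fin m)) => FF x q.1 q.2) (closure 𝕌) C W := by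
  subst h𝕌
  have hν : IsStrictMonoEquivIci ν νinv := ⟨hνmono, hνbij, hνinv⟩
  have hH : ∀ x ∉ C, ∀ p, hamiltonian (fun x => rescale ν (f x)) U x p =
      hamiltonian (fun x (q : ℝ × _) => FF x q.1 q.2) (closure (compactifiedControls U)) x p := by
    intro x hx p
    have hfx : ContinuousOn (f x) U :=
      hf.comp (continuousOn_const.prodMk continuousOn_id) fun u hu => ⟨hx, hu⟩
    have hG := hFFlim x (subset_closure hx)
    rw [hamiltonian_eq_sInf_image, hamiltonian_eq_sInf_image]
    exact sInf_image_eq_of_subset_of_subset_closure (continuous_const.inner continuous_id)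
      (rescale_image_subset_image_closure hν hUcone hfx hG)
      (image_closure_subset_closure_rescale_image hν hUcl hUcone hG)
  exact ⟨hH, fun W => isCLF_congr_of_hamiltonian_eq hH⟩

theorem stmt_6 {n m : ℕ}
    (U : Set (EuclideanSpace ℝ (Fin m))) (hUcl : IsClosed U)
    (hUcone : ∀ c : ℝ, 0 ≤ c → ∀ v ∈ U, c • v ∈ U)
    (C : Set (EuclideanSpace ℝ (Fin n))) (hC : IsClosed C)
    (ν : ℝ → ℝ) (hνmono : StrictMonoOn ν (Set.Ici 0))
    (hνbij : Set.BijOn ν (Set.Ici 0) (Set.Ici 0))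
    (νinv : ℝ → ℝ) (hνinv : Set.InvOn νinv ν (Set.Ici 0) (Set.Ici 0))
    (f : EuclideanSpace ℝ (Fin n) → EuclideanSpace ℝ (Fin m) → EuclideanSpace ℝ (Fin n))
    (hf : ContinuousOn (fun q : EuclideanSpace ℝ (Fin n) × EuclideanSpace ℝ (Fin m) =>
      f q.1 q.2) (Cᶜ ×ˢ U))
    -- the compactified control set 𝕌
    (𝕌 : Set (ℝ × EuclideanSpace ℝ (Fin m)))
    (h𝕌 : 𝕌 = {q : ℝ × EuclideanSpace ℝ (Fin m) | 0 < q.1 ∧ q.2 ∈ U ∧ q.1 + ‖q.2‖ = 1})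
    -- the extended dynamics F, assumed to exist as a limit of the rescaled dynamics,
    -- continuous and locally bounded on closure(ℝⁿ∖C) × closure 𝕌
    (FF : EuclideanSpace ℝ (Fin n) → ℝ → EuclideanSpace ℝ (Fin m) → EuclideanSpace ℝ (Fin n))
    (hFFlim : ∀ x ∈ closure Cᶜ, ∀ q ∈ closure 𝕌,
      Tendsto (fun r : ℝ =>
          (1 + ν ‖(νinv (‖q.2‖ / r)) • (‖q.2‖⁻¹ • q.2)‖)⁻¹ •
            f x ((νinv (‖q.2‖ / r)) • (‖q.2‖⁻¹ • q.2)))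
        (nhdsWithin q.1 (Set.Ioi q.1)) (nhds (FF x q.1 q.2)))
    (hFFc : ContinuousOn
      (fun q : EuclideanSpace ℝ (Fin n) × ℝ × EuclideanSpace ℝ (Fin m) =>
        FF q.1 q.2.1 q.2.2) (closure Cᶜ ×ˢ closure 𝕌))
    (hFFbd : ∀ K : Set (EuclideanSpace ℝ (Fin n)), IsCompact K →
      ∃ M : ℝ, ∀ x ∈ K ∩ closure Cᶜ, ∀ q ∈ closure 𝕌, ‖FF x q.1 q.2‖ ≤ M) :
    (∀ x ∉ C, ∀ p : EuclideanSpace ℝ (Fin n),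
      sInf {y : ℝ | ∃ u ∈ U, y = ⟪p, (1 + ν ‖u‖)⁻¹ • f x u⟫} =
      sInf {y : ℝ | ∃ q ∈ closure 𝕌, y = ⟪p, FF x q.1 q.2⟫}) ∧
    ∀ W : EuclideanSpace ℝ (Fin n) → ℝ,
      IsCLF (fun x u => (1 + ν ‖u‖)⁻¹ • f x u) U C W ↔
      IsCLF (fun x (q : ℝ × EuclideanSpace ℝ (Fin m)) => FF x q.1 q.2) (closure 𝕌) C W :=
  stmt_6_general U hUcl hUcone C ν hνmono hνbij νinv hνinv f hf 𝕌 h𝕌 FF hFFlim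
end

section
/- Let F : (ℝⁿ∖C) × closure(𝕌) → ℝⁿ be continuous, where 𝕌 = {(w₀,w) ∈ (0,∞)×U : w₀+|w|=1} and closure(𝕌) is compact. Let W be a control Lyapunov function for y' = F(y,w₀,w) with decrease rate γ, and suppose the graph set Γ_r = {(x,p) : x ∈ W⁻¹([min(r,1), max(r,1)]), p ∈ ∂_L W(x)} is nonempty and compact for each r > 0 (which follows from W being locally Lipschitz, proper, and the upper semicontinuity with local boundedness of x ↝ ∂_L W(x)). Then there exists a continuous function N : (0,∞) → (0,1], increasing on (0,1] and decreasing on [1,∞), such that for every x ∉ C, inf { ⟨p, F(x,w₀,w)⟩ : (w₀,w) ∈ 𝕌, w₀ ≥ N(W(x)) } < -γ(W(x)) for all p ∈ ∂_L W(x). -/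
/-!
Each point `(x, p)` of the compact graph set `Γ_r` admits a control `q` with
`⟪p, F(x, q)⟫ < -γ(W x)`, and by continuity the same `q` works near `(x, p)`; finitely many such
neighbourhoods cover `Γ_r`, so the smallest `w₀`-component among their controls is a positive
threshold valid on the whole band `W ∈ [min r 1, max r 1]`. Bands shrink as `r` approaches `1`, so
the supremum of the valid thresholds is monotone in `min r r⁻¹`, and any continuous monotone
positive minorant of it (an infimal convolution) composed with `r ↦ min r r⁻¹` is the required `N`.
-/

open Set Filter Metric
open scoped RealInnerProductSpace

open Topology

noncomputable def rampInfConv (g : ℝ → ℝ) (r : ℝ) : ℝ :=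
  ⨅ s : Ioi (0 : ℝ), g s + max (r - s) 0

section rampInfConv

variable {g : ℝ → ℝ}

lemma bddBelow_range_rampInfConv (hg : ∀ s > 0, 0 ≤ g s) (r : ℝ) :
    BddBelow (range fun s : Ioi (0 : ℝ) => g s + max (r - s) 0) :=
  ⟨0, by rintro _ ⟨s, rfl⟩; exact add_nonneg (hg s s.2) (le_max_right _ _)⟩

lemma rampInfConv_le_add (hg : ∀ s > 0, 0 ≤ g s) (r : ℝ) (s : Ioi (0 : ℝ)) :
    rampInfConv g r ≤ g s + max (r - s) 0 :=
  ciInf_le (bddBelow_range_rampInfConv hg r) s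

lemma rampInfConv_le (hg : ∀ s > 0, 0 ≤ g s) {r : ℝ} (hr : 0 < r) : rampInfConv g r ≤ g r := by
  simpa using rampInfConv_le_add hg r ⟨r, hr⟩

lemma rampInfConv_monotone (hg : ∀ s > 0, 0 ≤ g s) : Monotone (rampInfConv g) :=
  fun _ _ hrr' => ciInf_mono (bddBelow_range_rampInfConv hg _) fun _ =>
    add_le_add_right (max_le_max (sub_le_sub_right hrr' _) le_rfl) _

lemma lipschitzWith_one_rampInfConv (hg : ∀ s > 0, 0 ≤ g s) : LipschitzWith 1 (rampInfConv g) := by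
  refine LipschitzWith.of_le_add fun r r' => ?_
  rw [← sub_le_iff_le_add]
  refine le_ciInf fun s => ?_
  have hramp : max (r - s) 0 ≤ max (r' - s) 0 + dist r r' := by
    rw [Real.dist_eq]
    exact max_le (by linarith [le_max_left (r' - s) 0, le_abs_self (r - r')]) (by positivity)
  linarith [rampInfConv_le_add hg r s]

lemma rampInfConv_pos (hg : ∀ s > 0, 0 ≤ g s) (hgm : MonotoneOn g (Ioi 0)) {r : ℝ} (hr : 0 < r)
    (hgr : 0 < g (r / 2)) :
    0 < rampInfConv g r := by
  refine (lt_min hgr (half_pos hr)).trans_le (le_ciInf fun s => ?_)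
  rcases le_or_gt (r / 2) (s : ℝ) with hs | hs
  · have hgs := hgm (half_pos hr) s.2 hs
    linarith [min_le_left (g (r / 2)) (r / 2), le_max_right (r - s) 0]
  · linarith [min_le_right (g (r / 2)) (r / 2), le_max_left (r - s) 0, hg s s.2]

end rampInfConv

theorem exists_continuous_monotone_pos_lt {g : ℝ → ℝ} (hgm : MonotoneOn g (Ioi 0))
    (hgpos : ∀ s > 0, 0 < g s) :
    ∃ h : ℝ → ℝ, Continuous h ∧ Monotone h ∧ ∀ t > 0, 0 < h t ∧ h t < g t := by
  have hg : ∀ s > 0, 0 ≤ g s := fun s hs => (hgpos s hs).le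
  refine ⟨fun r => rampInfConv g r / 2,
    (lipschitzWith_one_rampInfConv hg).continuous.div_const 2,
    fun r r' hrr' => div_le_div_of_nonneg_right (rampInfConv_monotone hg hrr') two_pos.le,
    fun t ht => ?_⟩
  have hpos := rampInfConv_pos hg hgm ht (hgpos _ (half_pos ht))
  exact ⟨half_pos hpos, by linarith [rampInfConv_le hg ht]⟩

theorem exists_continuous_monotone_of_downward_closed (P : ℝ → ℝ → Prop)
    (hdown : ∀ t c c', c' ≤ c → P t c → P t c')
    (hmono : ∀ t t' c, 0 < t → t ≤ t' → P t c → P t' c)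
    (hex : ∀ t > 0, ∃ c > 0, P t c) :
    ∃ h : ℝ → ℝ, Continuous h ∧ Monotone h ∧ ∀ t > 0, 0 < h t ∧ P t (h t) := by
  set ρ : ℝ → ℝ := fun t => sSup ({c | P t c} ∩ Iic 1)
  have hbdd : ∀ t, BddAbove ({c | P t c} ∩ Iic 1) := fun t => ⟨1, fun _ hc => hc.2⟩
  have hne : ∀ t > 0, ∃ c > 0, c ∈ {c | P t c} ∩ Iic 1 := fun t ht => by
    obtain ⟨c, hc, hPc⟩ := hex t ht
    exact ⟨min c 1, lt_min hc one_pos, hdown t c _ (min_le_left _ _) hPc,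
      mem_Iic.2 (min_le_right c 1)⟩
  have hρm : MonotoneOn ρ (Ioi 0) := fun t ht t' _ htt' => by
    obtain ⟨c, -, hc⟩ := hne t ht
    exact csSup_le_csSup (hbdd t') ⟨c, hc⟩ fun c hc => ⟨hmono t t' c ht htt' hc.1, hc.2⟩
  have hρpos : ∀ t > 0, 0 < ρ t := fun t ht => by
    obtain ⟨c, hc, hcS⟩ := hne t ht
    exact hc.trans_le (le_csSup (hbdd t) hcS)
  obtain ⟨h, hc, hm, hh⟩ := exists_continuous_monotone_pos_lt hρm hρpos
  refine ⟨h, hc, hm, fun t ht => ⟨(hh t ht).1, ?_⟩⟩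
  obtain ⟨c₀, -, hc₀⟩ := hne t ht
  obtain ⟨c, ⟨hPc, -⟩, hlt⟩ := exists_lt_of_lt_csSup ⟨c₀, hc₀⟩ (hh t ht).2
  exact hdown t c _ hlt.le hPc

theorem IsCompact.exists_pos_forall_exists {X ι : Type*} [TopologicalSpace X] {K : Set X}
    (hK : IsCompact K) (a : ι → ℝ) {R : X → ι → Prop}
    (h : ∀ z ∈ K, ∃ i, 0 < a i ∧ ∀ᶠ z' in 𝓝 z, R z' i) :
    ∃ c > 0, ∀ z ∈ K, ∃ i, c ≤ a i ∧ R z i := by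
  refine hK.induction_on ⟨1, one_pos, by simp⟩ ?_ ?_ ?_
  · exact fun s t hst ⟨c, hc, ht⟩ => ⟨c, hc, fun z hz => ht z (hst hz)⟩
  · rintro s t ⟨c, hc, hs⟩ ⟨c', hc', ht⟩
    refine ⟨min c c', lt_min hc hc', fun z hz => ?_⟩
    rcases hz with hz | hz
    · obtain ⟨i, hi, hR⟩ := hs z hz
      exact ⟨i, (min_le_left _ _).trans hi, hR⟩
    · obtain ⟨i, hi, hR⟩ := ht z hz
      exact ⟨i, (min_le_right _ _).trans hi, hR⟩
  · intro z hz
    obtain ⟨i, hi, hR⟩ := h z hz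
    exact ⟨{z' | R z' i}, mem_nhdsWithin_of_mem_nhds hR, a i, hi, fun _ hz' => ⟨i, le_rfl, hz'⟩⟩

lemma continuousAt_of_lipschitzOnWith_of_isCompact {X Y : Type*} [PseudoMetricSpace X]
    [ProperSpace X] [PseudoMetricSpace Y] {f : X → Y} {s : Set X} {x : X} (hs : s ∈ 𝓝 x)
    (hf : ∀ K ⊆ s, IsCompact K → ∃ L, LipschitzOnWith L f K) : ContinuousAt f x := by
  obtain ⟨ε, hε, hball⟩ := nhds_basis_closedBall.mem_iff.mp hs
  obtain ⟨L, hL⟩ := hf _ hball (isCompact_closedBall x ε)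
  exact hL.continuousOn.continuousAt (closedBall_mem_nhds x hε)

lemma eventually_inner_lt_of_continuousAt {X E : Type*} [TopologicalSpace X]
    [NormedAddCommGroup E] [InnerProductSpace ℝ E] {f : X → E} {φ : X → ℝ} {x : X} {p : E}
    (hf : ContinuousAt f x) (hφ : ContinuousAt φ x) (h : ⟪p, f x⟫ < φ x) :
    ∀ᶠ z in 𝓝 (x, p), ⟪z.2, f z.1⟫ < φ z.1 :=
  (continuousAt_snd.inner (hf.comp continuousAt_fst)).eventually_lt (hφ.comp continuousAt_fst) h

lemma continuousOn_min_inv : ContinuousOn (fun r : ℝ => min r r⁻¹) (Ioi 0) :=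
  fun _ hr => continuousWithinAt_id.min (continuousWithinAt_id.inv₀ (ne_of_gt hr))

lemma min_inv_pos {r : ℝ} (hr : 0 < r) : 0 < min r r⁻¹ :=
  lt_min hr (inv_pos.2 hr)

lemma min_inv_eq_self {r : ℝ} (hr : r ∈ Ioc 0 1) : min r r⁻¹ = r :=
  min_eq_left (hr.2.trans ((one_le_inv₀ hr.1).mpr hr.2))

lemma min_inv_eq_inv {r : ℝ} (hr : r ∈ Ici 1) : min r r⁻¹ = r⁻¹ :=
  min_eq_right ((inv_le_one_of_one_le₀ hr).trans hr)

lemma monotoneOn_min_inv : MonotoneOn (fun r : ℝ => min r r⁻¹) (Ioc 0 1) :=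
  fun a ha b hb hab => by simpa only [min_inv_eq_self ha, min_inv_eq_self hb] using hab

lemma antitoneOn_min_inv : AntitoneOn (fun r : ℝ => min r r⁻¹) (Ici 1) :=
  fun a ha b hb hab => by
    simpa only [min_inv_eq_inv ha, min_inv_eq_inv hb] using inv_anti₀ (one_pos.trans_le ha) hab

lemma mem_Icc_min_inv {r : ℝ} (hr : 0 < r) : r ∈ Icc (min r r⁻¹) (min r r⁻¹)⁻¹ := by
  rcases le_total r 1 with h | h
  · rw [min_inv_eq_self ⟨hr, h⟩]
    exact ⟨le_rfl, h.trans ((one_le_inv₀ hr).mpr h)⟩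
  · rw [min_inv_eq_inv h, inv_inv]
    exact ⟨(inv_le_one_of_one_le₀ h).trans h, le_rfl⟩

lemma mem_Icc_min_max_or_of_mem_Icc_inv {t s : ℝ} (hs : s ∈ Icc t t⁻¹) :
    s ∈ Icc (min t 1) (max t 1) ∨ s ∈ Icc (min t⁻¹ 1) (max t⁻¹ 1) := by
  rcases le_total s 1 with h | h
  · exact Or.inl ⟨min_le_of_left_le hs.1, le_max_of_le_right h⟩
  · exact Or.inr ⟨min_le_of_right_le h, le_max_of_le_left hs.2⟩

section decreaseThreshold

variable {n m : ℕ} {C : Set (EuclideanSpace ℝ (Fin n))} {𝕌 : Set (ℝ × EuclideanSpace ℝ (Fin m))}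
  {FF : EuclideanSpace ℝ (Fin n) → ℝ × EuclideanSpace ℝ (Fin m) → EuclideanSpace ℝ (Fin n)}
  {W : EuclideanSpace ℝ (Fin n) → ℝ} {γ : ℝ → ℝ}

def bandGraph (C : Set (EuclideanSpace ℝ (Fin n))) (W : EuclideanSpace ℝ (Fin n) → ℝ) (a b : ℝ) :
    Set (EuclideanSpace ℝ (Fin n) × EuclideanSpace ℝ (Fin n)) :=
  {z | z.1 ∉ C ∧ W z.1 ∈ Icc a b ∧ z.2 ∈ limSubdiff W z.1}

/-- The band `t ≤ W ≤ t⁻¹` is the union of the paper's bands for `r = t` and `r = t⁻¹`. -/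
def IsDecreaseThreshold (C : Set (EuclideanSpace ℝ (Fin n)))
    (𝕌 : Set (ℝ × EuclideanSpace ℝ (Fin m)))
    (FF : EuclideanSpace ℝ (Fin n) → ℝ × EuclideanSpace ℝ (Fin m) → EuclideanSpace ℝ (Fin n))
    (W : EuclideanSpace ℝ (Fin n) → ℝ) (γ : ℝ → ℝ) (t c : ℝ) : Prop :=
  c ≤ 1 ∧ ∀ x ∉ C, W x ∈ Icc t t⁻¹ →
    ∀ p ∈ limSubdiff W x, ∃ q ∈ 𝕌, c ≤ q.1 ∧ ⟪p, FF x q⟫ < -γ (W x)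

lemma IsDecreaseThreshold.of_le {t c c' : ℝ} (h : IsDecreaseThreshold C 𝕌 FF W γ t c)
    (hc' : c' ≤ c) : IsDecreaseThreshold C 𝕌 FF W γ t c' :=
  ⟨hc'.trans h.1, fun x hx hWx p hp =>
    let ⟨q, hq, hcq, hlt⟩ := h.2 x hx hWx p hp; ⟨q, hq, hc'.trans hcq, hlt⟩⟩

lemma IsDecreaseThreshold.mono {t t' c : ℝ} (h : IsDecreaseThreshold C 𝕌 FF W γ t c)
    (ht : 0 < t) (htt' : t ≤ t') : IsDecreaseThreshold C 𝕌 FF W γ t' c :=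
  ⟨h.1, fun x hx hWx => h.2 x hx (Icc_subset_Icc htt' (inv_anti₀ ht htt') hWx)⟩

lemma exists_pos_isDecreaseThreshold {t : ℝ}
    (hK : IsCompact (bandGraph C W (min t 1) (max t 1) ∪ bandGraph C W (min t⁻¹ 1) (max t⁻¹ 1)))
    (hlocal : ∀ z : EuclideanSpace ℝ (Fin n) × EuclideanSpace ℝ (Fin n), z.1 ∉ C →
      z.2 ∈ limSubdiff W z.1 → ∃ q : ℝ × EuclideanSpace ℝ (Fin m), 0 < q.1 ∧
        ∀ᶠ z' in 𝓝 z, q ∈ 𝕌 ∧ ⟪z'.2, FF z'.1 q⟫ < -γ (W z'.1)) :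
    ∃ c > 0, IsDecreaseThreshold C 𝕌 FF W γ t c := by
  obtain ⟨c, hc, hcK⟩ := hK.exists_pos_forall_exists Prod.fst fun z hz => by
    rcases hz with ⟨hx, -, hp⟩ | ⟨hx, -, hp⟩ <;> exact hlocal z hx hp
  refine ⟨min c 1, lt_min hc one_pos, min_le_right _ _, fun x hx hWx p hp => ?_⟩
  obtain ⟨q, hcq, hq, hlt⟩ := hcK (x, p) <| (mem_Icc_min_max_or_of_mem_Icc_inv hWx).imp
    (fun h => ⟨hx, h, hp⟩) (fun h => ⟨hx, h, hp⟩)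
  exact ⟨q, hq, (min_le_left _ _).trans hcq, hlt⟩

end decreaseThreshold

theorem stmt_8_general {n m : ℕ}
    (U : Set (EuclideanSpace ℝ (Fin m)))
    (C : Set (EuclideanSpace ℝ (Fin n))) (hC : IsClosed C)
    (𝕌 : Set (ℝ × EuclideanSpace ℝ (Fin m)))
    (h𝕌 : 𝕌 = {q : ℝ × EuclideanSpace ℝ (Fin m) | 0 < q.1 ∧ q.2 ∈ U ∧ q.1 + ‖q.2‖ = 1})
    (FF : EuclideanSpace ℝ (Fin n) → ℝ × EuclideanSpace ℝ (Fin m) → EuclideanSpace ℝ (Fin n))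
    (hFFc : ContinuousOn
      (fun q : EuclideanSpace ℝ (Fin n) × ℝ × EuclideanSpace ℝ (Fin m) => FF q.1 q.2)
      (Cᶜ ×ˢ closure 𝕌))
    (W : EuclideanSpace ℝ (Fin n) → ℝ) (γ : ℝ → ℝ)
    -- `W` is a CLF for the extended system with decrease rate `γ`
    (hWlip : ∀ K ⊆ closure Cᶜ, IsCompact K → ∃ L : NNReal, LipschitzOnWith L W K)
    (hWpos : ∀ x ∉ C, 0 < W x)
    (hγc : ContinuousOn γ (Set.Ioi 0))
    (hdecr : ∀ x ∉ C, ∀ p ∈ limSubdiff W x, ∃ q ∈ 𝕌, ⟪p, FF x q⟫ < -γ (W x))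
    -- the graph sets Γ_r are nonempty and compact
    (hΓ : ∀ r > (0:ℝ),
      ({q : EuclideanSpace ℝ (Fin n) × EuclideanSpace ℝ (Fin n) |
        q.1 ∉ C ∧ W q.1 ∈ Set.Icc (min r 1) (max r 1) ∧
        q.2 ∈ limSubdiff W q.1}).Nonempty ∧
      IsCompact {q : EuclideanSpace ℝ (Fin n) × EuclideanSpace ℝ (Fin n) |
        q.1 ∉ C ∧ W q.1 ∈ Set.Icc (min r 1) (max r 1) ∧ q.2 ∈ limSubdiff W q.1}) :
    ∃ N : ℝ → ℝ, ContinuousOn N (Set.Ioi 0) ∧ (∀ r > (0:ℝ), N r ∈ Set.Ioc (0:ℝ) 1) ∧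
      MonotoneOn N (Set.Ioc 0 1) ∧ AntitoneOn N (Set.Ici 1) ∧
      ∀ x ∉ C, ∀ p ∈ limSubdiff W x,
        ∃ q ∈ 𝕌, N (W x) ≤ q.1 ∧ ⟪p, FF x q⟫ < -γ (W x) := by
  have hW : ∀ x ∉ C, ContinuousAt W x := fun x hx => continuousAt_of_lipschitzOnWith_of_isCompact
    (mem_of_superset (hC.isOpen_compl.mem_nhds hx) subset_closure) hWlip
  have hF : ∀ q ∈ closure 𝕌, ∀ x ∉ C, ContinuousAt (fun y => FF y q) x := fun q hq x hx =>
    (hFFc.comp (continuous_id.prodMk continuous_const).continuousOn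
      fun _ hy => ⟨hy, hq⟩).continuousAt (hC.isOpen_compl.mem_nhds hx)
  have hlocal : ∀ z : EuclideanSpace ℝ (Fin n) × EuclideanSpace ℝ (Fin n), z.1 ∉ C →
      z.2 ∈ limSubdiff W z.1 → ∃ q : ℝ × EuclideanSpace ℝ (Fin m), 0 < q.1 ∧
        ∀ᶠ z' in 𝓝 z, q ∈ 𝕌 ∧ ⟪z'.2, FF z'.1 q⟫ < -γ (W z'.1) := by
    rintro ⟨x, p⟩ hx hp
    obtain ⟨q, hq, hlt⟩ := hdecr x hx p hp
    have hγW : ContinuousAt (fun y => -γ (W y)) x :=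
      ((hγc.continuousAt (Ioi_mem_nhds (hWpos x hx))).comp (hW x hx)).neg
    refine ⟨q, (h𝕌 ▸ hq).1, (eventually_const.2 hq).and ?_⟩
    exact eventually_inner_lt_of_continuousAt (hF q (subset_closure hq) x hx) hγW hlt
  obtain ⟨h, hhc, hhm, hhP⟩ := exists_continuous_monotone_of_downward_closed
    (IsDecreaseThreshold C 𝕌 FF W γ) (fun _ _ _ hc' h => h.of_le hc')
    (fun _ _ _ ht htt' h => h.mono ht htt')
    fun t ht => exists_pos_isDecreaseThreshold ((hΓ t ht).2.union (hΓ t⁻¹ (inv_pos.2 ht)).2) hlocal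
  refine ⟨fun r => h (min r r⁻¹), hhc.comp_continuousOn continuousOn_min_inv,
    fun r hr => ⟨(hhP _ (min_inv_pos hr)).1, (hhP _ (min_inv_pos hr)).2.1⟩,
    hhm.comp_monotoneOn monotoneOn_min_inv, hhm.comp_antitoneOn antitoneOn_min_inv,
    fun x hx p hp => ?_⟩
  exact (hhP _ (min_inv_pos (hWpos x hx))).2.2 x hx (mem_Icc_min_inv (hWpos x hx)) p hp

theorem stmt_8 {n m : ℕ}
    (U : Set (EuclideanSpace ℝ (Fin m))) (hUcl : IsClosed U)
    (hUcone : ∀ c : ℝ, 0 ≤ c → ∀ v ∈ U, c • v ∈ U)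
    (C : Set (EuclideanSpace ℝ (Fin n))) (hC : IsClosed C)
    (𝕌 : Set (ℝ × EuclideanSpace ℝ (Fin m)))
    (h𝕌 : 𝕌 = {q : ℝ × EuclideanSpace ℝ (Fin m) | 0 < q.1 ∧ q.2 ∈ U ∧ q.1 + ‖q.2‖ = 1})
    (h𝕌cpt : IsCompact (closure 𝕌))
    (FF : EuclideanSpace ℝ (Fin n) → ℝ × EuclideanSpace ℝ (Fin m) → EuclideanSpace ℝ (Fin n))
    (hFFc : ContinuousOn
      (fun q : EuclideanSpace ℝ (Fin n) × ℝ × EuclideanSpace ℝ (Fin m) => FF q.1 q.2)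
      (Cᶜ ×ˢ closure 𝕌))
    (W : EuclideanSpace ℝ (Fin n) → ℝ) (γ : ℝ → ℝ)
    -- `W` is a CLF for the extended system with decrease rate `γ`
    (hWlip : ∀ K ⊆ closure Cᶜ, IsCompact K → ∃ L : NNReal, LipschitzOnWith L W K)
    (hWpos : ∀ x ∉ C, 0 < W x) (hWzero : ∀ x ∈ frontier C, W x = 0) (hWnn : ∀ x, 0 ≤ W x)
    (hWproper : ∀ K : Set ℝ, IsCompact K → IsCompact (Cᶜ ∩ W ⁻¹' K))
    (hγc : ContinuousOn γ (Set.Ioi 0)) (hγmono : StrictMonoOn γ (Set.Ioi 0))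
    (hγpos : ∀ r > (0:ℝ), 0 < γ r)
    (hdecr : ∀ x ∉ C, ∀ p ∈ limSubdiff W x, ∃ q ∈ 𝕌, ⟪p, FF x q⟫ < -γ (W x))
    -- the graph sets Γ_r are nonempty and compact
    (hΓ : ∀ r > (0:ℝ),
      ({q : EuclideanSpace ℝ (Fin n) × EuclideanSpace ℝ (Fin n) |
        q.1 ∉ C ∧ W q.1 ∈ Set.Icc (min r 1) (max r 1) ∧
        q.2 ∈ limSubdiff W q.1}).Nonempty ∧
      IsCompact {q : EuclideanSpace ℝ (Fin n) × EuclideanSpace ℝ (Fin n) |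
        q.1 ∉ C ∧ W q.1 ∈ Set.Icc (min r 1) (max r 1) ∧ q.2 ∈ limSubdiff W q.1}) :
    ∃ N : ℝ → ℝ, ContinuousOn N (Set.Ioi 0) ∧ (∀ r > (0:ℝ), N r ∈ Set.Ioc (0:ℝ) 1) ∧
      MonotoneOn N (Set.Ioc 0 1) ∧ AntitoneOn N (Set.Ici 1) ∧
      ∀ x ∉ C, ∀ p ∈ limSubdiff W x,
        ∃ q ∈ 𝕌, N (W x) ≤ q.1 ∧ ⟪p, FF x q⟫ < -γ (W x) :=
  stmt_8_general U C hC 𝕌 h𝕌 FF hFFc W γ hWlip hWpos hγc hdecr hΓ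
end

section
/- In the key compactness step of the proof that N(r) > 0: Let Γ ⊆ ℝⁿ × ℝⁿ be compact, F : (ℝⁿ∖C) × closure(𝕌) → ℝⁿ continuous, W : ℝⁿ∖C → [0,∞) continuous, γ : (0,∞) → (0,∞) continuous, and suppose for every (x,p) ∈ Γ there exists (w₀,w) ∈ 𝕌 with w₀ > 0 and ⟨p, F(x,w₀,w)⟩ < -γ(W(x)). Then inf_{(x,p)∈Γ} sup{ w₀ : (w₀,w) ∈ 𝕌, ⟨p, F(x,w₀,w)⟩ < -γ(W(x)) } > 0. -/
open Set Filter Metric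
open scoped RealInnerProductSpace

theorem stmt_9 {n m : ℕ}
    (U : Set (EuclideanSpace ℝ (Fin m))) (hUcl : IsClosed U)
    (hUcone : ∀ c : ℝ, 0 ≤ c → ∀ v ∈ U, c • v ∈ U)
    (C : Set (EuclideanSpace ℝ (Fin n)))
    (𝕌 : Set (ℝ × EuclideanSpace ℝ (Fin m)))
    (h𝕌 : 𝕌 = {q : ℝ × EuclideanSpace ℝ (Fin m) | 0 < q.1 ∧ q.2 ∈ U ∧ q.1 + ‖q.2‖ = 1})
    (FF : EuclideanSpace ℝ (Fin n) → ℝ → EuclideanSpace ℝ (Fin m) → EuclideanSpace ℝ (Fin n))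
    (hFFc : ContinuousOn
      (fun q : EuclideanSpace ℝ (Fin n) × ℝ × EuclideanSpace ℝ (Fin m) =>
        FF q.1 q.2.1 q.2.2) (Cᶜ ×ˢ closure 𝕌))
    (W : EuclideanSpace ℝ (Fin n) → ℝ) (hWc : ContinuousOn W Cᶜ)
    (γ : ℝ → ℝ) (hγc : ContinuousOn γ (Set.Ioi 0))
    (hγW : ContinuousOn (fun x => γ (W x)) Cᶜ)
    (Γ : Set (EuclideanSpace ℝ (Fin n) × EuclideanSpace ℝ (Fin n)))
    (hΓcpt : IsCompact Γ) (hΓne : Γ.Nonempty)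
    (hΓsub : ∀ q ∈ Γ, q.1 ∉ C)
    (hpt : ∀ q ∈ Γ, ∃ w0 w, (w0, w) ∈ 𝕌 ∧ 0 < w0 ∧ ⟪q.2, FF q.1 w0 w⟫ < -γ (W q.1)) :
    0 < sInf ((fun q : EuclideanSpace ℝ (Fin n) × EuclideanSpace ℝ (Fin n) =>
      sSup {w0 : ℝ | ∃ w, (w0, w) ∈ 𝕌 ∧ ⟪q.2, FF q.1 w0 w⟫ < -γ (W q.1)}) '' Γ) := by
  set g : EuclideanSpace ℝ (Fin n) × EuclideanSpace ℝ (Fin n) → ℝ :=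
    fun q => sSup {w0 : ℝ | ∃ w, (w0, w) ∈ 𝕌 ∧ ⟪q.2, FF q.1 w0 w⟫ < -γ (W q.1)} with hg
  have hbdd : ∀ q : EuclideanSpace ℝ (Fin n) × EuclideanSpace ℝ (Fin n),
      BddAbove {w0 : ℝ | ∃ w, (w0, w) ∈ 𝕌 ∧ ⟪q.2, FF q.1 w0 w⟫ < -γ (W q.1)} := by
    intro q
    refine ⟨1, fun a ha => ?_⟩
    obtain ⟨w, hw, -⟩ := ha
    rw [h𝕌] at hw
    obtain ⟨-, -, hsum⟩ := hw
    nlinarith [norm_nonneg w]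
  have key : ∀ q ∈ Γ, ∃ ε : ℝ, 0 < ε ∧ ∃ O : Set (EuclideanSpace ℝ (Fin n) ×
      EuclideanSpace ℝ (Fin n)), IsOpen O ∧ q ∈ O ∧ ∀ q' ∈ Γ ∩ O, ε ≤ g q' := by
    intro q hq
    obtain ⟨w0, w, hw𝕌, hw0pos, hlt⟩ := hpt q hq
    set h : EuclideanSpace ℝ (Fin n) × EuclideanSpace ℝ (Fin n) → ℝ :=
      fun q' => ⟪q'.2, FF q'.1 w0 w⟫ + γ (W q'.1) with hh
    have hS : Γ ⊆ (Cᶜ ×ˢ (univ : Set (EuclideanSpace ℝ (Fin n)))) := by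
      intro q' hq'
      exact ⟨hΓsub q' hq', trivial⟩
    have hcont : ContinuousOn h (Cᶜ ×ˢ (univ : Set (EuclideanSpace ℝ (Fin n)))) := by
      have hFF : ContinuousOn (fun q' : EuclideanSpace ℝ (Fin n) × EuclideanSpace ℝ (Fin n) =>
          FF q'.1 w0 w) (Cᶜ ×ˢ (univ : Set (EuclideanSpace ℝ (Fin n)))) := by
        have hmaps : Set.MapsTo (fun q' : EuclideanSpace ℝ (Fin n) × EuclideanSpace ℝ (Fin n) =>
            (q'.1, w0, w)) (Cᶜ ×ˢ (univ : Set (EuclideanSpace ℝ (Fin n)))) (Cᶜ ×ˢ closure 𝕌) :=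
          fun q' hq' => ⟨hq'.1, subset_closure hw𝕌⟩
        exact hFFc.comp (by fun_prop) hmaps
      have hγWc : ContinuousOn (fun q' : EuclideanSpace ℝ (Fin n) × EuclideanSpace ℝ (Fin n) =>
          γ (W q'.1)) (Cᶜ ×ˢ (univ : Set (EuclideanSpace ℝ (Fin n)))) := by
        exact hγW.comp continuous_fst.continuousOn (fun q' hq' => hq'.1)
      exact (ContinuousOn.inner continuous_snd.continuousOn hFF).add hγWc
    have hhq : h q < 0 := by
      show ⟪q.2, FF q.1 w0 w⟫ + γ (W q.1) < 0
      linarith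
    have hev : {q' | h q' < 0} ∈ nhdsWithin q Γ := by
      have := ((hcont q (hS hq)).mono hS).tendsto
      exact this (Iio_mem_nhds hhq)
    rw [mem_nhdsWithin] at hev
    obtain ⟨O, hOopen, hqO, hsub⟩ := hev
    refine ⟨w0, hw0pos, O, hOopen, hqO, fun q' hq' => ?_⟩
    have hh' : h q' < 0 := hsub ⟨hq'.2, hq'.1⟩
    have hmem : w0 ∈ {w0 : ℝ | ∃ w, (w0, w) ∈ 𝕌 ∧ ⟪q'.2, FF q'.1 w0 w⟫ < -γ (W q'.1)} :=
      ⟨w, hw𝕌, by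
        have : ⟪q'.2, FF q'.1 w0 w⟫ + γ (W q'.1) < 0 := hh'
        linarith⟩
    exact le_csSup (hbdd q') hmem
  choose ε hεpos O hOopen hqO hbound using key
  obtain ⟨t, ht⟩ := hΓcpt.elim_nhds_subcover' (fun q hq => O q hq)
    (fun q hq => (hOopen q hq).mem_nhds (hqO q hq))
  have htne : t.Nonempty := by
    obtain ⟨q0, hq0⟩ := hΓne
    have := ht hq0
    simp only [Set.mem_iUnion] at this
    obtain ⟨q, hqt, -⟩ := this
    exact ⟨q, hqt⟩
  set ε0 : ℝ := t.inf' htne (fun q => ε q q.2) with hε0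
  have hε0pos : 0 < ε0 := by
    rw [hε0, Finset.lt_inf'_iff]
    exact fun q _ => hεpos q q.2
  have hle : ε0 ≤ sInf (g '' Γ) := by
    refine le_csInf (hΓne.image g) ?_
    rintro b ⟨q', hq', rfl⟩
    have := ht hq'
    simp only [Set.mem_iUnion] at this
    obtain ⟨q, hqt, hq'O⟩ := this
    calc ε0 ≤ ε q q.2 := Finset.inf'_le _ hqt
    _ ≤ g q' := hbound q q.2 q' ⟨hq', hq'O⟩
  exact lt_of_lt_of_le hε0pos hle
end

section
/- Consider the scalar control system ẋ = x - x³u with u ∈ [0,M] for a fixed M > 0. For any initial condition x(0) = z ≠ 0 and constant control u ≡ M, the unique solution is x(t) = z e^t / sqrt(z²M(e^{2t}-1)+1), and x(t) → sign(z)/√M as t → +∞. In particular, |x(t)| ≥ min(|z|, 1/√M)·c for a positive constant, and x(t) does not tend to 0; hence the system restricted to controls with values in [0,M] is not globally asymptotically controllable to {0}. -/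
/-!
The closed form solves the Bernoulli equation `ẋ = x - M x³` (it is the solution for which `1 / x²`
solves the linear equation `u̇ = 2 M - 2 u`), and since `w ↦ w - M w³` is `C¹`, hence locally
Lipschitz, it is the only solution from `z`. Dividing numerator and denominator by `eᵗ` gives
`x t = z / √(z² M + (1 - z² M) e^{-2t})`, whose limit is `z / √(z² M) = sign z / √M ≠ 0`.
-/

open Filter Set Real

theorem ODE_solution_unique_Ici_of_locallyLipschitz {E : Type*} [NormedAddCommGroup E]
    [NormedSpace ℝ E] {v : E → E} (hv : LocallyLipschitz v) {f g : ℝ → E} {a : ℝ}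
    (hf : ∀ t ≥ a, HasDerivAt f (v (f t)) t) (hg : ∀ t ≥ a, HasDerivAt g (v (g t)) t)
    (ha : f a = g a) : EqOn f g (Ici a) := by
  intro t ht
  have hfc : ContinuousOn f (Icc a t) := fun u hu => (hf u hu.1).continuousAt.continuousWithinAt
  have hgc : ContinuousOn g (Icc a t) := fun u hu => (hg u hu.1).continuousAt.continuousWithinAt
  set s := f '' Icc a t ∪ g '' Icc a t
  have hs : IsCompact s := (isCompact_Icc.image_of_continuousOn hfc).union
    (isCompact_Icc.image_of_continuousOn hgc)
  obtain ⟨K, hK⟩ := hv.locallyLipschitzOn.exists_lipschitzOnWith_of_compact hs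
  refine ODE_solution_unique_of_mem_Icc_right (v := fun _ => v) (s := fun _ => s) (K := K)
    (fun _ _ => hK) hfc (fun u hu => (hf u hu.1).hasDerivWithinAt)
    (fun u hu => Or.inl ⟨u, Ico_subset_Icc_self hu, rfl⟩) hgc
    (fun u hu => (hg u hu.1).hasDerivWithinAt)
    (fun u hu => Or.inr ⟨u, Ico_subset_Icc_self hu, rfl⟩) ha ⟨ht, le_rfl⟩

theorem locallyLipschitz_sub_mul_pow_three (M : ℝ) : LocallyLipschitz fun w : ℝ => w - M * w ^ 3 :=
  ContDiff.locallyLipschitz (𝕂 := ℝ) (by fun_prop)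

noncomputable def cubicFlow (M z t : ℝ) : ℝ :=
  z * exp t / √(z ^ 2 * M * (exp (2 * t) - 1) + 1)

theorem cubicFlow_zero (M z : ℝ) : cubicFlow M z 0 = z := by
  simp [cubicFlow]

theorem cubicFlow_radicand_pos {M : ℝ} (hM : 0 ≤ M) (z : ℝ) {t : ℝ} (ht : 0 ≤ t) :
    0 < z ^ 2 * M * (exp (2 * t) - 1) + 1 := by
  have : 0 ≤ exp (2 * t) - 1 := sub_nonneg.2 (one_le_exp (by linarith))
  positivity

theorem hasDerivAt_cubicFlow {M z t : ℝ} (hD : 0 < z ^ 2 * M * (exp (2 * t) - 1) + 1) :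
    HasDerivAt (cubicFlow M z) (cubicFlow M z t - M * cubicFlow M z t ^ 3) t := by
  have hexp2 : HasDerivAt (fun t => exp (2 * t)) (exp (2 * t) * 2) t := by
    simpa using ((hasDerivAt_id t).const_mul 2).exp
  have hsqrt := ((hexp2.sub_const 1).const_mul (z ^ 2 * M)).add_const 1 |>.sqrt hD.ne'
  unfold cubicFlow
  refine (((hasDerivAt_exp t).const_mul z).div hsqrt (sqrt_pos.2 hD).ne').congr_deriv ?_
  set s := √(z ^ 2 * M * (exp (2 * t) - 1) + 1)
  have hs : s ≠ 0 := (sqrt_pos.2 hD).ne'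
  rw [show exp (2 * t) = exp t ^ 2 by rw [sq, ← exp_add, two_mul]]
  field_simp

theorem cubicFlow_eq_div_sqrt (M z t : ℝ) :
    cubicFlow M z t = z / √(z ^ 2 * M + (1 - z ^ 2 * M) * exp (-(2 * t))) := by
  have key : z ^ 2 * M * (exp (2 * t) - 1) + 1
      = exp t ^ 2 * (z ^ 2 * M + (1 - z ^ 2 * M) * exp (-(2 * t))) := by
    have h2 : exp (2 * t) = exp t ^ 2 := by rw [sq, ← exp_add, two_mul]
    have hinv : exp t ^ 2 * exp (-(2 * t)) = 1 := by rw [← h2, ← exp_add]; simp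
    rw [h2]
    linear_combination (z ^ 2 * M - 1) * hinv
  rw [cubicFlow, key, sqrt_mul (sq_nonneg _), sqrt_sq (exp_pos t).le, mul_comm z,
    mul_div_mul_left _ _ (exp_pos t).ne']

theorem div_sqrt_sq_mul (z M : ℝ) : z / √(z ^ 2 * M) = Real.sign z / √M := by
  rw [sqrt_mul (sq_nonneg z), sqrt_sq_eq_abs, ← div_div]
  congr 1
  rcases lt_trichotomy z 0 with h | rfl | h
  · rw [sign_of_neg h, abs_of_neg h, div_neg, div_self h.ne]
  · simp
  · rw [sign_of_pos h, abs_of_pos h, div_self h.ne']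

theorem tendsto_cubicFlow_atTop {M : ℝ} (hM : 0 < M) {z : ℝ} (hz : z ≠ 0) :
    Tendsto (cubicFlow M z) atTop (nhds (Real.sign z / √M)) := by
  have hexp : Tendsto (fun t => exp (-(2 * t))) atTop (nhds 0) :=
    tendsto_exp_neg_atTop_nhds_zero.comp (tendsto_id.const_mul_atTop two_pos)
  have hrad := (hexp.const_mul (1 - z ^ 2 * M)).const_add (z ^ 2 * M)
  rw [mul_zero, add_zero] at hrad
  rw [funext (cubicFlow_eq_div_sqrt M z), ← div_sqrt_sq_mul]
  exact tendsto_const_nhds.div hrad.sqrt (by positivity)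

theorem stmt_10 (M : ℝ) (hM : 0 < M) (z : ℝ) (hz : z ≠ 0)
    (x : ℝ → ℝ)
    (hx : ∀ t : ℝ, x t = z * Real.exp t / Real.sqrt (z ^ 2 * M * (Real.exp (2 * t) - 1) + 1)) :
    x 0 = z ∧
    (∀ t ≥ (0:ℝ), HasDerivAt x (x t - M * (x t) ^ 3) t) ∧
    (∀ y : ℝ → ℝ, y 0 = z → (∀ t ≥ (0:ℝ), HasDerivAt y (y t - M * (y t) ^ 3) t) →
      ∀ t ≥ (0:ℝ), y t = x t) ∧
    Tendsto x atTop (nhds (Real.sign z / Real.sqrt M)) ∧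
    (∀ t ≥ (0:ℝ), x t ≠ 0) ∧
    ¬ Tendsto x atTop (nhds 0) := by
  obtain rfl : x = cubicFlow M z := funext hx
  have hderiv : ∀ t ≥ (0:ℝ), HasDerivAt (cubicFlow M z)
      (cubicFlow M z t - M * cubicFlow M z t ^ 3) t := fun t ht =>
    hasDerivAt_cubicFlow (cubicFlow_radicand_pos hM.le z ht)
  have hlim := tendsto_cubicFlow_atTop hM hz
  refine ⟨cubicFlow_zero M z, hderiv, fun y hy0 hy t ht => ?_, hlim, fun t ht => ?_, fun h0 => ?_⟩
  · exact ODE_solution_unique_Ici_of_locallyLipschitz (locallyLipschitz_sub_mul_pow_three M)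
      hy hderiv (hy0.trans (cubicFlow_zero M z).symm) ht
  · exact div_ne_zero (mul_ne_zero hz (exp_pos t).ne')
      (sqrt_pos.2 (cubicFlow_radicand_pos hM.le z ht)).ne'
  · exact div_ne_zero (Real.sign_eq_zero_iff.not.2 hz) (sqrt_pos.2 hM).ne'
      (tendsto_nhds_unique hlim h0)
end

section
/- Let x solve ẋ(t) = x(t) - (2/a²)·x(t)³ on [t₀, t₁] with x(t₀) = a ≠ 0 and t₁ - t₀ ≤ ln φ, where φ = (1+√5)/2 is the golden ratio. Then x(t) = a e^{t-t₀}/sqrt(2e^{2(t-t₀)} - 1), and |x(t)| ≤ |a| e^{-(t-t₀)/2} for all t ∈ [t₀, t₁]. (The key inequality is that e^{3τ} - 2e^{2τ} + 1 ≤ 0, equivalently e^{2τ}/(2e^{2τ}-1) ≤ e^{-τ}, for all τ ∈ [0, ln φ].) -/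
/-!
Substituting `y = x⁻²` turns the Bernoulli equation `ẋ = x - (2/a²) x³` into the linear
equation `ẏ = -2y + 4/a²`, which gives the explicit solution; since the vector field is `C¹`,
it is the only one. With `E = e^{t-t₀}` the bound, squared, reads `E² / (2E² - 1) ≤ E⁻¹`,
i.e. `E³ - 2E² + 1 = (E - 1)(E² - E - 1) ≤ 0`, which holds exactly for `1 ≤ E ≤ φ`.
-/

open Real Set goldenRatio

theorem eqOn_Icc_of_hasDerivAt_of_locallyLipschitz {E : Type*} [NormedAddCommGroup E]
    [NormedSpace ℝ E] {v : E → E} (hv : LocallyLipschitz v) {f g : ℝ → E} {a b : ℝ}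
    (hf : ∀ t ∈ Icc a b, HasDerivAt f (v (f t)) t)
    (hg : ∀ t ∈ Icc a b, HasDerivAt g (v (g t)) t) (ha : f a = g a) :
    EqOn f g (Icc a b) := by
  have hfc : ContinuousOn f (Icc a b) := HasDerivAt.continuousOn hf
  have hgc : ContinuousOn g (Icc a b) := HasDerivAt.continuousOn hg
  set s := f '' Icc a b ∪ g '' Icc a b
  obtain ⟨K, hK⟩ := (hv.locallyLipschitzOn (s := s)).exists_lipschitzOnWith_of_compact
    ((isCompact_Icc.image_of_continuousOn hfc).union (isCompact_Icc.image_of_continuousOn hgc))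
  exact ODE_solution_unique_of_mem_Icc_right (s := fun _ ↦ s) (fun _ _ ↦ hK) hfc
    (fun t ht ↦ (hf t (Ico_subset_Icc_self ht)).hasDerivWithinAt)
    (fun t ht ↦ .inl (mem_image_of_mem f (Ico_subset_Icc_self ht))) hgc
    (fun t ht ↦ (hg t (Ico_subset_Icc_self ht)).hasDerivWithinAt)
    (fun t ht ↦ .inr (mem_image_of_mem g (Ico_subset_Icc_self ht))) ha

theorem pow_three_le_two_mul_sq_sub_one {E : ℝ} (h1 : 1 ≤ E) (hφ : E ≤ φ) :
    E ^ 3 ≤ 2 * E ^ 2 - 1 := by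
  have hsq : E ^ 2 ≤ E + 1 := by
    nlinarith [mul_nonpos_of_nonpos_of_nonneg (sub_nonpos.2 hφ)
      (show 0 ≤ E + φ - 1 by linarith [goldenRatio_pos]), goldenRatio_sq]
  nlinarith [mul_nonneg (sub_nonneg.2 h1) (sub_nonneg.2 hsq)]

theorem exp_two_mul_div_le_exp_neg {τ : ℝ} (h0 : 0 ≤ τ) (hτ : τ ≤ log φ) :
    exp (2 * τ) / (2 * exp (2 * τ) - 1) ≤ exp (-τ) := by
  have h1 : 1 ≤ exp τ := one_le_exp h0
  have hφ : exp τ ≤ φ := (exp_le_exp.2 hτ).trans_eq (exp_log goldenRatio_pos)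
  have hcubic := pow_three_le_two_mul_sq_sub_one h1 hφ
  have h2 : exp (2 * τ) = exp τ ^ 2 := by rw [← exp_nat_mul]; norm_num
  rw [exp_neg, h2, div_le_iff₀ (by nlinarith), ← div_eq_inv_mul, le_div_iff₀ (by positivity)]
  linear_combination hcubic

noncomputable def cubicSol (a t0 t : ℝ) : ℝ :=
  a * exp (t - t0) / √(2 * exp (2 * (t - t0)) - 1)

theorem hasDerivAt_cubicSol (a : ℝ) {t0 t : ℝ} (ht : t0 ≤ t) :
    HasDerivAt (cubicSol a t0) (cubicSol a t0 t - 2 / a ^ 2 * cubicSol a t0 t ^ 3) t := by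
  have hE2 : exp (2 * (t - t0)) = exp (t - t0) ^ 2 := by rw [← exp_nat_mul]; norm_num
  have hD : 0 < 2 * exp (t - t0) ^ 2 - 1 := by nlinarith [one_le_exp (sub_nonneg.2 ht)]
  have hnum : HasDerivAt (fun s ↦ a * exp (s - t0)) (a * exp (t - t0)) t :=
    (((hasDerivAt_id t).sub_const t0).exp.const_mul a).congr_deriv (by simp)
  have hrad : HasDerivAt (fun s ↦ 2 * exp (2 * (s - t0)) - 1) (4 * exp (t - t0) ^ 2) t := by
    refine HasDerivAt.congr_deriv
      (((((hasDerivAt_id t).sub_const t0).const_mul 2).exp.const_mul 2).sub_const 1) ?_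
    simp only [id_eq, hE2, mul_one]; ring
  have hcube : 2 / a ^ 2 * cubicSol a t0 t ^ 3
      = 2 * a * exp (t - t0) ^ 3 / √(2 * exp (t - t0) ^ 2 - 1) ^ 3 := by
    rcases eq_or_ne a 0 with rfl | ha
    · simp [cubicSol]
    · simp only [cubicSol, hE2]; field_simp
  refine (hnum.div (hrad.sqrt (hE2 ▸ hD.ne')) (sqrt_pos.2 (hE2 ▸ hD)).ne').congr_deriv ?_
  rw [hcube, cubicSol, hE2]
  field_simp
  ring

theorem abs_cubicSol_le (a : ℝ) {t0 t : ℝ} (ht : t0 ≤ t) (hlen : t - t0 ≤ log φ) :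
    |cubicSol a t0 t| ≤ |a| * exp (-(t - t0) / 2) := by
  have hD : 0 < 2 * exp (2 * (t - t0)) - 1 := by
    nlinarith [one_le_exp (show 0 ≤ 2 * (t - t0) by linarith)]
  have hsq : cubicSol a t0 t ^ 2
      = a ^ 2 * (exp (2 * (t - t0)) / (2 * exp (2 * (t - t0)) - 1)) := by
    rw [cubicSol, div_pow, mul_pow, sq_sqrt hD.le, ← exp_nat_mul]
    push_cast; ring_nf
  have hexp : exp (-(t - t0) / 2) ^ 2 = exp (-(t - t0)) := by
    rw [← exp_nat_mul]; push_cast; ring_nf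
  rw [← sq_le_sq₀ (abs_nonneg _) (by positivity), sq_abs, mul_pow, sq_abs, hsq, hexp]
  exact mul_le_mul_of_nonneg_left (exp_two_mul_div_le_exp_neg (by linarith) hlen) (sq_nonneg a)

theorem stmt_14_general (a t0 t1 : ℝ)
    (hlen : t1 - t0 ≤ Real.log ((1 + Real.sqrt 5) / 2))
    (x : ℝ → ℝ) (hx0 : x t0 = a)
    (hode : ∀ t ∈ Set.Icc t0 t1, HasDerivAt x (x t - (2 / a ^ 2) * (x t) ^ 3) t) :
    ∀ t ∈ Set.Icc t0 t1,
      x t = a * Real.exp (t - t0) / Real.sqrt (2 * Real.exp (2 * (t - t0)) - 1) ∧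
      |x t| ≤ |a| * Real.exp (-(t - t0) / 2) := by
  have hv : ContDiff ℝ 1 fun z : ℝ ↦ z - 2 / a ^ 2 * z ^ 3 := by fun_prop
  have hx : EqOn x (cubicSol a t0) (Icc t0 t1) :=
    eqOn_Icc_of_hasDerivAt_of_locallyLipschitz hv.locallyLipschitz hode
      (fun t ht ↦ hasDerivAt_cubicSol a ht.1) (by norm_num [hx0, cubicSol])
  intro t ht
  rw [hx ht]
  exact ⟨rfl, abs_cubicSol_le a ht.1 (by linarith [ht.2])⟩

theorem stmt_14 (a t0 t1 : ℝ) (ha : a ≠ 0) (h01 : t0 ≤ t1)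
    (hlen : t1 - t0 ≤ Real.log ((1 + Real.sqrt 5) / 2))
    (x : ℝ → ℝ) (hx0 : x t0 = a)
    (hode : ∀ t ∈ Set.Icc t0 t1, HasDerivAt x (x t - (2 / a ^ 2) * (x t) ^ 3) t) :
    ∀ t ∈ Set.Icc t0 t1,
      x t = a * Real.exp (t - t0) / Real.sqrt (2 * Real.exp (2 * (t - t0)) - 1) ∧
      |x t| ≤ |a| * Real.exp (-(t - t0) / 2) :=
  stmt_14_general a t0 t1 hlen x hx0 hode
end
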